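/- Let X be a partial HDA, K ⊆ X a set of cells, U ⊊ V conclists, W ⊆ V, and P an interval ipomset in iPoms^q with target interface U. Then X(K, P*⟨U,V,W⟩) = X(X(K,P), ⟨U,V,W⟩), where ⟨U,V,W⟩ is the discrete ipomset on V with source interface U and target interface W. -/

import Mathlib

/-!
When the interfaces carry no precedence, a gluing `P * Q` amounts to a cut of its events into a
lower part and an upper part overlapping exactly in the shared interface, `P` and `Q` being the
two restrictions. Cuts make gluing associative, so a path recognizing `P` followed by a path
recognizing `⟨U,V,W⟩` recognizes `P * ⟨U,V,W⟩`.

Conversely, peel off the steps of a path recognizing `P * Q`, `Q = ⟨U,V,W⟩`. Each step is a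
discrete starter or terminator `D` with `D * R₂ = P * Q`. No event precedes an event of `D`,
whereas every non-target event of `P` precedes the events of `V ∖ U ≠ ∅`; so `D` lies inside
`P`, and `P = D * P₂`, `R₂ = P₂ * Q`. As `P ∈ iPoms^q`, every event of `P` starts before some
non-target event terminates; `P₂` inherits this unless it is an identity, and then the rest of
the path recognizes `Q`.
-/

open scoped Classical

namespace HDA

/-! ### Ipomsets over a fixed alphabet -/

structure PreIpomset (σ : Type) : Type 1 where
  carrier : Type
  fin : Finite carrier
  lt : carrier → carrier → Prop
  evord : carrier → carrier → Prop
  S : Set carrier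
  T : Set carrier
  lab : carrier → σ

namespace PreIpomset

variable {σ : Type}

/-- The precedence order is empty. -/
def Discrete (P : PreIpomset σ) : Prop := ∀ x y, ¬ P.lt x y

/-- Validity: `lt` is a strict partial order which is an interval order, `evord` is acyclic,
for distinct events exactly one of the four relations holds, sources are minimal and
targets are maximal.  (All ipomsets considered are interval.) -/
structure IsIpomset (P : PreIpomset σ) : Prop where
  lt_trans : ∀ x y z, P.lt x y → P.lt y z → P.lt x z
  lt_irrefl : ∀ x, ¬ P.lt x x
  evord_acyclic : ∀ x, ¬ Relation.TransGen P.evord x x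
  total : ∀ x y : P.carrier, x ≠ y → P.lt x y ∨ P.lt y x ∨ P.evord x y ∨ P.evord y x
  lt_not_evord : ∀ x y, P.lt x y → ¬ P.evord x y ∧ ¬ P.evord y x
  src_min : ∀ x ∈ P.S, ∀ y, ¬ P.lt y x
  tgt_max : ∀ x ∈ P.T, ∀ y, ¬ P.lt x y
  interval : ∀ w x y z, P.lt w x → P.lt y z → P.lt w z ∨ P.lt y x

/-- A conclist: a discrete ipomset with empty interfaces. -/
def IsConclist (P : PreIpomset σ) : Prop :=
  P.IsIpomset ∧ P.Discrete ∧ P.S = ∅ ∧ P.T = ∅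

/-- A starter `⟨U∖A,U,U⟩`. -/
def IsStarter (P : PreIpomset σ) : Prop := P.IsIpomset ∧ P.Discrete ∧ P.T = Set.univ

/-- A terminator `⟨U,U,U∖B⟩`. -/
def IsTerminator (P : PreIpomset σ) : Prop := P.IsIpomset ∧ P.Discrete ∧ P.S = Set.univ

/-- An identity `⟨U,U,U⟩`. -/
def IsIdentityIpomset (P : PreIpomset σ) : Prop :=
  P.IsIpomset ∧ P.Discrete ∧ P.S = Set.univ ∧ P.T = Set.univ

def IsProperStarter (P : PreIpomset σ) : Prop := P.IsStarter ∧ P.S ≠ Set.univ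

def IsProperTerminator (P : PreIpomset σ) : Prop := P.IsTerminator ∧ P.T ≠ Set.univ

/-- Isomorphism of (pre)ipomsets. -/
def Iso (P Q : PreIpomset σ) : Prop :=
  ∃ f : P.carrier ≃ Q.carrier,
    (∀ x y, P.lt x y ↔ Q.lt (f x) (f y)) ∧
    (∀ x y, P.evord x y ↔ Q.evord (f x) (f y)) ∧
    (∀ x, x ∈ P.S ↔ f x ∈ Q.S) ∧
    (∀ x, x ∈ P.T ↔ f x ∈ Q.T) ∧
    (∀ x, Q.lab (f x) = P.lab x)

/-- Restriction to a subset of events, with empty interfaces. -/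
def restrict (P : PreIpomset σ) (K : Set P.carrier) : PreIpomset σ where
  carrier := {x : P.carrier // x ∈ K}
  fin := by haveI := P.fin; exact inferInstance
  lt := fun x y => P.lt x.val y.val
  evord := fun x y => P.evord x.val y.val
  S := ∅
  T := ∅
  lab := fun x => P.lab x.val

/-- The source interface of `P` as a conclist. -/
def srcIface (P : PreIpomset σ) : PreIpomset σ := P.restrict P.S

/-- The target interface of `P` as a conclist. -/
def tgtIface (P : PreIpomset σ) : PreIpomset σ := P.restrict P.T

/-- The underlying conclist (forget interfaces). -/
def conclistOf (P : PreIpomset σ) : PreIpomset σ := { P with S := ∅, T := ∅ }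

/-- The identity ipomset `⟨U,U,U⟩` on the conclist underlying `P`. -/
def idOf (P : PreIpomset σ) : PreIpomset σ := { P with S := Set.univ, T := Set.univ }

/-- The discrete ipomset `⟨S,U,T⟩` on the conclist underlying `P`. -/
def withIfaces (P : PreIpomset σ) (S T : Set P.carrier) : PreIpomset σ :=
  { P with S := S, T := T }

/-- The starter `⟨U∖A,U,U⟩` on the conclist underlying `P`. -/
def starter (P : PreIpomset σ) (A : Set P.carrier) : PreIpomset σ :=
  { P with S := Aᶜ, T := Set.univ }

/-- The terminator `⟨U,U,U∖B⟩` on the conclist underlying `P`. -/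
def terminator (P : PreIpomset σ) (B : Set P.carrier) : PreIpomset σ :=
  { P with S := Set.univ, T := Bᶜ }

/-- A matching `T_P ≅ S_Q`, i.e. an isomorphism of interface conclists
along which `P` and `Q` may be glued. -/
structure Matching (P Q : PreIpomset σ) : Type where
  g : {x : P.carrier // x ∈ P.T} ≃ {y : Q.carrier // y ∈ Q.S}
  evord_iff : ∀ x y, P.evord x.val y.val ↔ Q.evord (g x).val (g y).val
  lab_eq : ∀ x, Q.lab (g x).val = P.lab x.val

def gluePOf (P Q : PreIpomset σ) :
    P.carrier ⊕ {y : Q.carrier // y ∉ Q.S} → Option P.carrier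
  | Sum.inl x => some x
  | Sum.inr _ => none

noncomputable def glueQOf (P Q : PreIpomset σ) (m : Matching P Q) :
    P.carrier ⊕ {y : Q.carrier // y ∉ Q.S} → Option Q.carrier
  | Sum.inl x => if h : x ∈ P.T then some (m.g ⟨x, h⟩).val else none
  | Sum.inr y => some y.val

/-- The gluing `P * Q` along a matching `T_P ≅ S_Q`. -/
noncomputable def glue (P Q : PreIpomset σ) (m : Matching P Q) : PreIpomset σ where
  carrier := P.carrier ⊕ {y : Q.carrier // y ∉ Q.S}
  fin := by haveI := P.fin; haveI := Q.fin; exact inferInstance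
  lt := fun u v =>
    (∃ x x', gluePOf P Q u = some x ∧ gluePOf P Q v = some x' ∧ P.lt x x') ∨
    (∃ y y', glueQOf P Q m u = some y ∧ glueQOf P Q m v = some y' ∧ Q.lt y y') ∨
    ((∃ x, gluePOf P Q u = some x ∧ x ∉ P.T) ∧
     (∃ y, glueQOf P Q m v = some y ∧ y ∉ Q.S))
  evord := fun u v =>
    (∃ x x', gluePOf P Q u = some x ∧ gluePOf P Q v = some x' ∧ P.evord x x') ∨
    (∃ y y', glueQOf P Q m u = some y ∧ glueQOf P Q m v = some y' ∧ Q.evord y y')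
  S := {u | ∃ x, gluePOf P Q u = some x ∧ x ∈ P.S}
  T := {u | ∃ y, glueQOf P Q m u = some y ∧ y ∈ Q.T}
  lab := Sum.elim P.lab fun y => Q.lab y.val

/-- `R` is (isomorphic to) the gluing `P * Q`; in particular `T_P ≅ S_Q`. -/
def GlueRel (P Q R : PreIpomset σ) : Prop :=
  ∃ m : Matching P Q, Iso (glue P Q m) R

/-- A choice of gluing (used when a matching is known to exist). -/
noncomputable def glueChoice (P Q : PreIpomset σ) : PreIpomset σ :=
  if h : Nonempty (Matching P Q) then glue P Q h.some else P

/-- `GluesTo l R`: `R` is the gluing of the nonempty list `l` of ipomsets. -/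
inductive GluesTo : List (PreIpomset σ) → PreIpomset σ → Prop
  | single {P R : PreIpomset σ} : Iso P R → GluesTo [P] R
  | cons {P : PreIpomset σ} {l : List (PreIpomset σ)} {R' R : PreIpomset σ} :
      GluesTo l R' → GlueRel P R' R → GluesTo (P :: l) R

/-- Proper starters and proper terminators alternate. -/
def Alternating (l : List (PreIpomset σ)) : Prop :=
  l.Chain' fun P Q => (IsProperStarter P ∧ IsProperTerminator Q) ∨
    (IsProperTerminator P ∧ IsProperStarter Q)

/-- `l` is a sparse step decomposition of `R`: either a single identity, or an
alternating sequence of proper starters and proper terminators gluing to `R`. -/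
def IsSparseDecomp (l : List (PreIpomset σ)) (R : PreIpomset σ) : Prop :=
  GluesTo l R ∧
  ((∃ I, l = [I] ∧ IsIdentityIpomset I) ∨
   ((∀ P ∈ l, IsProperStarter P ∨ IsProperTerminator P) ∧ Alternating l))

/-- `P ∈ iPoms^q`: the sparse step decomposition of `P` does not end with a
proper starter (i.e. it ends with a terminator or is a single identity). -/
def InQ (P : PreIpomset σ) : Prop :=
  ∃ l, IsSparseDecomp l P ∧ ∀ Q, l.getLast? = some Q → ¬ IsProperStarter Q

end PreIpomset

open PreIpomset

variable {σ : Type}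

/-! ### Languages and rational operations -/

def glueLang (L M : Set (PreIpomset σ)) : Set (PreIpomset σ) :=
  {R | ∃ P ∈ L, ∃ Q ∈ M, GlueRel P Q R}

def powLang (L : Set (PreIpomset σ)) : ℕ → Set (PreIpomset σ)
  | 0 => L
  | n + 1 => glueLang L (powLang L n)

/-- `L⁺ = ⋃_{n ≥ 1} Lⁿ`. -/
def plusLang (L : Set (PreIpomset σ)) : Set (PreIpomset σ) := ⋃ n, powLang L n

/-- Rational languages of (interval) ipomsets: generated from `∅` and singletons
(up to isomorphism) of starters and terminators by union, gluing composition and plus. -/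
inductive Rational : Set (PreIpomset σ) → Prop
  | empty : Rational ∅
  | single {P : PreIpomset σ} : IsStarter P ∨ IsTerminator P → Rational {Q | Iso Q P}
  | union {L M : Set (PreIpomset σ)} : Rational L → Rational M → Rational (L ∪ M)
  | concat {L M : Set (PreIpomset σ)} : Rational L → Rational M → Rational (glueLang L M)
  | plus {L : Set (PreIpomset σ)} : Rational L → Rational (plusLang L)

/-! ### P-automata -/

structure PAutomaton (σ : Type) : Type 1 where
  Q : Type
  E : Type
  src : E → Q
  tgt : E → Q
  lab : E → PreIpomset σ
  mu : Q → PreIpomset σ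
  start : Set Q
  accept : Set Q

namespace PAutomaton

variable {σ : Type}

/-- The axioms of a P-automaton: finite sets of states and transitions, states
labelled by conclists, transitions by interval ipomsets, with
`μ(s(e)) ≅ S_{λ(e)}` and `μ(t(e)) ≅ T_{λ(e)}`. -/
def IsPA (A : PAutomaton σ) : Prop :=
  Finite A.Q ∧ Finite A.E ∧
  (∀ q, (A.mu q).IsConclist) ∧ (∀ e, (A.lab e).IsIpomset) ∧
  (∀ e, Iso (A.lab e).srcIface (A.mu (A.src e))) ∧
  (∀ e, Iso (A.lab e).tgtIface (A.mu (A.tgt e)))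

/-- ST-automaton: every label is a starter or a terminator. -/
def IsST (A : PAutomaton σ) : Prop := ∀ e, IsStarter (A.lab e) ∨ IsTerminator (A.lab e)

/-- gST-automaton: every label is discrete. -/
def IsGST (A : PAutomaton σ) : Prop := ∀ e, (A.lab e).Discrete

/-- No transition is labelled by an identity. -/
def NoSilent (A : PAutomaton σ) : Prop := ∀ e, ¬ IsIdentityIpomset (A.lab e)

/-- A reduced gST-automaton: no silent transitions and conditions (a)–(f). -/
def Reduced (A : PAutomaton σ) : Prop :=
  NoSilent A ∧
  (∀ e, A.tgt e ∉ A.start) ∧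
  (∀ e, A.src e ∉ A.accept) ∧
  (∀ e, (A.lab e).T = Set.univ → A.tgt e ∈ A.accept) ∧
  (∀ e, (A.lab e).S = Set.univ → A.src e ∈ A.start) ∧
  (∀ e e', A.src e ∈ A.start → A.src e' = A.src e → e' = e) ∧
  (∀ e e', A.tgt e ∈ A.accept → A.tgt e' = A.tgt e → e' = e)

/-- Paths in a P-automaton, from a state to a state. -/
inductive Path (A : PAutomaton σ) : A.Q → A.Q → Type
  | nil (q : A.Q) : Path A q q
  | cons (e : A.E) {r : A.Q} (rest : Path A (A.tgt e) r) : Path A (A.src e) r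

/-- The (interval) ipomset recognized by a path, up to isomorphism:
the gluing of the labels of its transitions (an identity for a constant path). -/
inductive Rec {A : PAutomaton σ} : ∀ {p r : A.Q}, Path A p r → PreIpomset σ → Prop
  | nil (q : A.Q) (R : PreIpomset σ) : Iso (A.mu q).idOf R → Rec (Path.nil q) R
  | cons (e : A.E) {r : A.Q} (rest : Path A (A.tgt e) r) {R' R : PreIpomset σ} :
      Rec rest R' → GlueRel (A.lab e) R' R → Rec (Path.cons e rest) R

/-- The language of a P-automaton. -/
def lang (A : PAutomaton σ) : Set (PreIpomset σ) :=
  {R | ∃ p r, ∃ α : Path A p r, p ∈ A.start ∧ r ∈ A.accept ∧ Rec α R}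

/-- Dimension of a transition. -/
noncomputable def dim (A : PAutomaton σ) (e : A.E) : ℕ := Nat.card (A.lab e).carrier

/-- Number of bad starter transitions of dimension `n`. -/
noncomputable def bst (A : PAutomaton σ) (n : ℕ) : ℕ :=
  Nat.card {e : A.E // IsProperStarter (A.lab e) ∧ A.tgt e ∉ A.accept ∧ A.dim e = n}

/-- Number of bad terminator transitions of dimension `n`. -/
noncomputable def btt (A : PAutomaton σ) (n : ℕ) : ℕ :=
  Nat.card {e : A.E // IsProperTerminator (A.lab e) ∧ A.src e ∉ A.start ∧ A.dim e = n}

/-- The automaton `𝒜_c`: remove the starter transition `c`; for every transition `e`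
out of `t(c)` add a transition `e*` from `s(c)` to `t(e)` labelled `λ(c) * λ(e)`. -/
noncomputable def Ac (A : PAutomaton σ) (c : A.E) : PAutomaton σ where
  Q := A.Q
  E := {e : A.E // e ≠ c} ⊕ {e : A.E // A.src e = A.tgt c}
  src := Sum.elim (fun e => A.src e.val) fun _ => A.src c
  tgt := Sum.elim (fun e => A.tgt e.val) fun e => A.tgt e.val
  lab := Sum.elim (fun e => A.lab e.val) fun e => glueChoice (A.lab c) (A.lab e.val)
  mu := A.mu
  start := A.start
  accept := A.accept

/-- Disjoint union of two P-automata. -/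
def sumAut (A B : PAutomaton σ) : PAutomaton σ where
  Q := A.Q ⊕ B.Q
  E := A.E ⊕ B.E
  src := Sum.elim (Sum.inl ∘ A.src) (Sum.inr ∘ B.src)
  tgt := Sum.elim (Sum.inl ∘ A.tgt) (Sum.inr ∘ B.tgt)
  lab := Sum.elim A.lab B.lab
  mu := Sum.elim A.mu B.mu
  start := Sum.inl '' A.start ∪ Sum.inr '' B.start
  accept := Sum.inl '' A.accept ∪ Sum.inr '' B.accept

/-- Concatenation `𝒜 * ℬ`: disjoint union together with identity-labelled transitions
from accepting states of `𝒜` to initial states of `ℬ` with isomorphic state labels. -/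
def concatAut (A B : PAutomaton σ) : PAutomaton σ where
  Q := A.Q ⊕ B.Q
  E := A.E ⊕ B.E ⊕
    {pq : A.Q × B.Q // pq.1 ∈ A.accept ∧ pq.2 ∈ B.start ∧ Iso (A.mu pq.1) (B.mu pq.2)}
  src := Sum.elim (Sum.inl ∘ A.src)
    (Sum.elim (Sum.inr ∘ B.src) fun pq => Sum.inl pq.val.1)
  tgt := Sum.elim (Sum.inl ∘ A.tgt)
    (Sum.elim (Sum.inr ∘ B.tgt) fun pq => Sum.inr pq.val.2)
  lab := Sum.elim A.lab (Sum.elim B.lab fun pq => (A.mu pq.val.1).idOf)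
  mu := Sum.elim A.mu B.mu
  start := Sum.inl '' A.start
  accept := Sum.inr '' B.accept

/-- Kleene plus `𝒜⁺`: add identity-labelled transitions from accepting states
to initial states with isomorphic state labels. -/
def plusAut (A : PAutomaton σ) : PAutomaton σ where
  Q := A.Q
  E := A.E ⊕
    {pq : A.Q × A.Q // pq.1 ∈ A.accept ∧ pq.2 ∈ A.start ∧ Iso (A.mu pq.1) (A.mu pq.2)}
  src := Sum.elim A.src fun pq => pq.val.1
  tgt := Sum.elim A.tgt fun pq => pq.val.2
  lab := Sum.elim A.lab fun pq => (A.mu pq.val.1).idOf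
  mu := A.mu
  start := A.start
  accept := A.accept

end PAutomaton

/-! ### Partial HDAs -/

/-- `g` exhibits `V` as the sub-conclist of `U` obtained by removing the events in `K`. -/
def IsFaceEmbed (U : PreIpomset σ) (K : Set U.carrier) (V : PreIpomset σ)
    (g : V.carrier → U.carrier) : Prop :=
  Function.Injective g ∧ Set.range g = Kᶜ ∧
  (∀ u v, V.evord u v ↔ U.evord (g u) (g v)) ∧
  (∀ u, U.lab (g u) = V.lab u)

/-- The data of a partial higher-dimensional automaton: cells labelled by conclists,
partial face maps, initial and accepting cells. -/
structure PrePHDA (σ : Type) : Type 1 where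
  cell : Type
  ev : cell → PreIpomset σ
  face : (x : cell) → Set (ev x).carrier → Set (ev x).carrier → Option cell
  start : Set cell
  accept : Set cell

namespace PrePHDA

variable {σ : Type}

/-- The lax precubical identity: whenever `δ_{A,B}(x)` and `δ_{C,D}(δ_{A,B}(x))` are
defined, `δ_{A∪C,B∪D}(x)` is defined and equal to the composite. -/
def IsLax (X : PrePHDA σ) : Prop :=
  ∀ x (A B : Set (X.ev x).carrier) y, X.face x A B = some y →
    ∀ g, IsFaceEmbed (X.ev x) (A ∪ B) (X.ev y) g →
      ∀ (C D : Set (X.ev y).carrier) z, X.face y C D = some z →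
        X.face x (A ∪ g '' C) (B ∪ g '' D) = some z

/-- The axioms of a partial HDA. -/
def IsPHDA (X : PrePHDA σ) : Prop :=
  (∀ x, (X.ev x).IsConclist) ∧
  (∀ x, X.face x ∅ ∅ = some x) ∧
  (∀ x A B y, X.face x A B = some y →
    Disjoint A B ∧ ∃ g, IsFaceEmbed (X.ev x) (A ∪ B) (X.ev y) g) ∧
  IsLax X

/-- Strictness: `δ_{C,D} ∘ δ_{A,B} = δ_{A∪C,B∪D}` as partial functions. -/
def IsStrict (X : PrePHDA σ) : Prop :=
  IsPHDA X ∧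
  (∀ x (A B : Set (X.ev x).carrier) y, X.face x A B = some y →
    ∀ g, IsFaceEmbed (X.ev x) (A ∪ B) (X.ev y) g →
      ∀ C D : Set (X.ev y).carrier,
        X.face x (A ∪ g '' C) (B ∪ g '' D) = X.face y C D) ∧
  (∀ x (A B C D : Set (X.ev x).carrier),
    Disjoint (A ∪ C) (B ∪ D) → C ∪ D ⊆ (A ∪ B)ᶜ →
    X.face x A B = none → X.face x (A ∪ C) (B ∪ D) = none)

/-- Paths in a partial HDA: sequences of upsteps and downsteps. -/
inductive Path (X : PrePHDA σ) : X.cell → X.cell → Type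
  | nil (x : X.cell) : Path X x x
  | up {x z : X.cell} (y : X.cell) (A : Set (X.ev y).carrier)
      (h : X.face y A ∅ = some x) (rest : Path X y z) : Path X x z
  | down {z w : X.cell} (y : X.cell) (B : Set (X.ev y).carrier)
      (h : X.face y ∅ B = some z) (rest : Path X z w) : Path X y w

/-- Directions of the steps of a path (`true` = upstep). -/
def Path.dirs {X : PrePHDA σ} : {x z : X.cell} → Path X x z → List Bool
  | _, _, .nil _ => []
  | _, _, .up _ _ _ rest => true :: rest.dirs
  | _, _, .down _ _ _ rest => false :: rest.dirs

/-- A path is sparse if upsteps and downsteps alternate. -/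
def Path.Sparse {X : PrePHDA σ} {x z : X.cell} (α : Path X x z) : Prop :=
  α.dirs.Chain' (· ≠ ·)

/-- Concatenation of paths. -/
def Path.comp {X : PrePHDA σ} : {x y z : X.cell} → Path X x y → Path X y z → Path X x z
  | _, _, _, .nil _, β => β
  | _, _, _, .up y A h rest, β => .up y A h (rest.comp β)
  | _, _, _, .down y B h rest, β => .down y B h (rest.comp β)

/-- The ipomset recognized by a path, up to isomorphism: the gluing of the starters
and terminators of its steps (an identity for a constant path). -/
inductive Rec {X : PrePHDA σ} : ∀ {x z : X.cell}, Path X x z → PreIpomset σ → Prop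
  | nil (x : X.cell) (R : PreIpomset σ) :
      Iso (X.ev x).idOf R → Rec (Path.nil x) R
  | up {x z : X.cell} (y : X.cell) (A : Set (X.ev y).carrier)
      (h : X.face y A ∅ = some x) (rest : Path X y z) {R' R : PreIpomset σ} :
      Rec rest R' → GlueRel ((X.ev y).starter A) R' R → Rec (Path.up y A h rest) R
  | down {z w : X.cell} (y : X.cell) (B : Set (X.ev y).carrier)
      (h : X.face y ∅ B = some z) (rest : Path X z w) {R' R : PreIpomset σ} :
      Rec rest R' → GlueRel ((X.ev y).terminator B) R' R → Rec (Path.down y B h rest) R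

/-- The language of a partial HDA. -/
def lang (X : PrePHDA σ) : Set (PreIpomset σ) :=
  {R | ∃ x z, ∃ α : Path X x z, x ∈ X.start ∧ z ∈ X.accept ∧ Rec α R}

/-- `X(K,P)`: cells reachable from `K` by a path recognizing `P`. -/
def track (X : PrePHDA σ) (K : Set X.cell) (P : PreIpomset σ) : Set X.cell :=
  {x | ∃ s, ∃ α : Path X s x, s ∈ K ∧ Rec α P}

/-- Deterministic partial HDA: at most one initial cell per conclist, and lower
face maps are "injective" in the appropriate sense. -/
def Deterministic (X : PrePHDA σ) : Prop :=
  (∀ x y, x ∈ X.start → y ∈ X.start → Iso (X.ev x) (X.ev y) → x = y) ∧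
  (∀ (y y' : X.cell) (A : Set (X.ev y).carrier) (A' : Set (X.ev y').carrier)
      (x : X.cell), X.face y A ∅ = some x → X.face y' A' ∅ = some x →
    (∃ f : (X.ev y).carrier ≃ (X.ev y').carrier,
      (∀ u v, (X.ev y).evord u v ↔ (X.ev y').evord (f u) (f v)) ∧
      (∀ u, (X.ev y').lab (f u) = (X.ev y).lab u) ∧ f '' A = A') → y = y')

end PrePHDA

/-! ### Relational HDAs -/

/-- The data of a relational HDA: face relations instead of partial face maps. -/
structure PreRHDA (σ : Type) : Type 1 where
  cell : Type
  ev : cell → PreIpomset σ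
  face : (x : cell) → Set (ev x).carrier → Set (ev x).carrier → Set cell
  start : Set cell
  accept : Set cell

namespace PreRHDA

variable {σ : Type}

/-- The axioms of a relational HDA, with the lax precubical identity
`δ_{C,D} ∘ δ_{A,B} ⊆ δ_{A∪C,B∪D}`. -/
def IsRHDA (X : PreRHDA σ) : Prop :=
  (∀ x, (X.ev x).IsConclist) ∧
  (∀ x, X.face x ∅ ∅ = {x}) ∧
  (∀ x A B y, y ∈ X.face x A B →
    Disjoint A B ∧ ∃ g, IsFaceEmbed (X.ev x) (A ∪ B) (X.ev y) g) ∧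
  (∀ x (A B : Set (X.ev x).carrier) y, y ∈ X.face x A B →
    ∀ g, IsFaceEmbed (X.ev x) (A ∪ B) (X.ev y) g →
      ∀ (C D : Set (X.ev y).carrier) z, z ∈ X.face y C D →
        z ∈ X.face x (A ∪ g '' C) (B ∪ g '' D))

/-- Paths in a relational HDA. -/
inductive Path (X : PreRHDA σ) : X.cell → X.cell → Type 1
  | nil (x : X.cell) : Path X x x
  | up {x z : X.cell} (y : X.cell) (A : Set (X.ev y).carrier)
      (h : x ∈ X.face y A ∅) (rest : Path X y z) : Path X x z
  | down {z w : X.cell} (y : X.cell) (B : Set (X.ev y).carrier)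
      (h : z ∈ X.face y ∅ B) (rest : Path X z w) : Path X y w

/-- The ipomset recognized by a path in a relational HDA. -/
inductive Rec {X : PreRHDA σ} : ∀ {x z : X.cell}, Path X x z → PreIpomset σ → Prop
  | nil (x : X.cell) (R : PreIpomset σ) :
      Iso (X.ev x).idOf R → Rec (Path.nil x) R
  | up {x z : X.cell} (y : X.cell) (A : Set (X.ev y).carrier)
      (h : x ∈ X.face y A ∅) (rest : Path X y z) {R' R : PreIpomset σ} :
      Rec rest R' → GlueRel ((X.ev y).starter A) R' R → Rec (Path.up y A h rest) R
  | down {z w : X.cell} (y : X.cell) (B : Set (X.ev y).carrier)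
      (h : z ∈ X.face y ∅ B) (rest : Path X z w) {R' R : PreIpomset σ} :
      Rec rest R' → GlueRel ((X.ev y).terminator B) R' R → Rec (Path.down y B h rest) R

/-- The language of a relational HDA. -/
def lang (X : PreRHDA σ) : Set (PreIpomset σ) :=
  {R | ∃ x z, ∃ α : Path X x z, x ∈ X.start ∧ z ∈ X.accept ∧ Rec α R}

/-- The ST-automaton `ST(X)` of a relational HDA `X`: states are cells, transitions
mimic the starting and terminating of events. -/
def stAut (X : PreRHDA σ) : PAutomaton σ where
  Q := X.cell
  E := (Σ q : X.cell, Σ A : Set (X.ev q).carrier, {p : X.cell // p ∈ X.face q A ∅}) ⊕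
       (Σ q : X.cell, Σ B : Set (X.ev q).carrier, {r : X.cell // r ∈ X.face q ∅ B})
  src := Sum.elim (fun t => t.2.2.val) fun t => t.1
  tgt := Sum.elim (fun t => t.1) fun t => t.2.2.val
  lab := Sum.elim (fun t => (X.ev t.1).starter t.2.1) fun t => (X.ev t.1).terminator t.2.1
  mu := X.ev
  start := X.start
  accept := X.accept

end PreRHDA

/-! ### The partial HDA of a reduced gST-automaton -/

open PAutomaton

/-- The cell representing a state `q` in `X(𝒜)`: `q` is merged with a terminator
transition out of it or a starter transition into it, if such exists. -/
noncomputable def cellOfState (A : PAutomaton σ) (q : A.Q) : A.E ⊕ A.Q :=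
  if h : ∃ e, IsTerminator (A.lab e) ∧ A.src e = q then Sum.inl h.choose
  else if h' : ∃ e, IsStarter (A.lab e) ∧ A.tgt e = q then Sum.inl h'.choose
  else Sum.inr q

/-- `X(𝒜)`: cells are `(Q ⊔ E)/∼`, with the only defined (nontrivial) face maps
`δ⁰_{U∖S}([e]) = [s(e)]` and `δ¹_{U∖T}([e]) = [t(e)]` for `λ(e) = ⟨S,U,T⟩`. -/
noncomputable def XofA (A : PAutomaton σ) : PrePHDA σ where
  cell := A.E ⊕ A.Q
  ev := Sum.elim (fun e => (A.lab e).conclistOf) A.mu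
  face := fun x =>
    match x with
    | Sum.inl e => fun As Bs =>
        if As = ∅ ∧ Bs = ∅ then some (Sum.inl e)
        else if As = (A.lab e).Sᶜ ∧ Bs = ∅ then some (cellOfState A (A.src e))
        else if As = ∅ ∧ Bs = (A.lab e).Tᶜ then some (cellOfState A (A.tgt e))
        else none
    | Sum.inr q => fun As Bs =>
        if As = ∅ ∧ Bs = ∅ then some (Sum.inr q) else none
  start := cellOfState A '' A.start
  accept := cellOfState A '' A.accept

end HDA

namespace HDA

theorem exists_extend_of_injective {α β γ δ : Type*} {i : α → γ} {j : β → γ}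
    (hi : Function.Injective i) (hj : Function.Injective j)
    (hcov : ∀ r, (∃ x, i x = r) ∨ ∃ y, j y = r) {i' : α → δ} {j' : β → δ}
    (hij : ∀ x y, i x = j y → i' x = j' y) :
    ∃ φ : γ → δ, (∀ x, φ (i x) = i' x) ∧ ∀ y, φ (j y) = j' y := by
  refine ⟨fun r => if h : ∃ x, i x = r then i' h.choose else j' ((hcov r).resolve_left h).choose,
    fun x => ?_, fun y => ?_⟩
  · have h : ∃ x', i x' = i x := ⟨x, rfl⟩
    simp only [dif_pos h, hi h.choose_spec]
  · dsimp only
    split_ifs with h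
    · exact hij _ _ h.choose_spec
    · rw [hj ((hcov (j y)).resolve_left h).choose_spec]

namespace PreIpomset

variable {σ : Type}

theorem Iso.symm {P Q : PreIpomset σ} (h : Iso P Q) : Iso Q P := by
  obtain ⟨f, hlt, hev, hS, hT, hlab⟩ := h
  refine ⟨f.symm, fun x y => ?_, fun x y => ?_, fun x => ?_, fun x => ?_, fun x => ?_⟩
  · simpa using (hlt (f.symm x) (f.symm y)).symm
  · simpa using (hev (f.symm x) (f.symm y)).symm
  · simpa using (hS (f.symm x)).symm
  · simpa using (hT (f.symm x)).symm
  · simpa using (hlab (f.symm x)).symm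

theorem Iso.trans {P Q R : PreIpomset σ} (h : Iso P Q) (h' : Iso Q R) : Iso P R := by
  obtain ⟨f, h1, h2, h3, h4, h5⟩ := h
  obtain ⟨g, g1, g2, g3, g4, g5⟩ := h'
  exact ⟨f.trans g, fun x y => (h1 x y).trans (g1 _ _), fun x y => (h2 x y).trans (g2 _ _),
    fun x => (h3 x).trans (g3 _), fun x => (h4 x).trans (g4 _), fun x => (g5 (f x)).trans (h5 x)⟩

theorem Iso.discrete {P Q : PreIpomset σ} (h : Iso P Q) (hP : P.Discrete) : Q.Discrete := by
  obtain ⟨f, hlt, -⟩ := h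
  intro x y hxy
  exact hP (f.symm x) (f.symm y) ((hlt _ _).2 (by simpa using hxy))

theorem GlueRel.trans_iso {P Q R R' : PreIpomset σ} (h : GlueRel P Q R) (h' : Iso R R') :
    GlueRel P Q R' :=
  let ⟨m, hm⟩ := h; ⟨m, hm.trans h'⟩

def SourcesMinimal (P : PreIpomset σ) : Prop := ∀ x ∈ P.S, ∀ y, ¬ P.lt y x

def TargetsMaximal (P : PreIpomset σ) : Prop := ∀ x ∈ P.T, ∀ y, ¬ P.lt x y

def IsIdentity (P : PreIpomset σ) : Prop := P.Discrete ∧ P.S = Set.univ ∧ P.T = Set.univ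

/-- Every event starts before some event outside the target interface has terminated, reading
`p < q` as "`p` terminates before `q` starts". -/
def StartsBeforeTermination (P : PreIpomset σ) : Prop := ∀ q, ∃ p, p ∉ P.T ∧ ¬ P.lt p q

theorem Discrete.sourcesMinimal {P : PreIpomset σ} (h : P.Discrete) : P.SourcesMinimal :=
  fun _ _ y => h y _

theorem Discrete.targetsMaximal {P : PreIpomset σ} (h : P.Discrete) : P.TargetsMaximal :=
  fun x _ _ => h x _

theorem Iso.isIdentity {P Q : PreIpomset σ} (h : Iso P Q) (hP : P.IsIdentity) : Q.IsIdentity := by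
  refine ⟨h.discrete hP.1, ?_, ?_⟩ <;> obtain ⟨f, -, -, hS, hT, -⟩ := h <;>
    refine Set.eq_univ_of_forall fun q => ?_
  · simpa using (hS (f.symm q)).1 (hP.2.1 ▸ Set.mem_univ _)
  · simpa using (hT (f.symm q)).1 (hP.2.2 ▸ Set.mem_univ _)

theorem IsIdentity.of_isEmpty {P : PreIpomset σ} (h : IsEmpty P.carrier) : P.IsIdentity :=
  ⟨fun a => h.elim a, Set.eq_univ_of_forall fun a => h.elim a,
    Set.eq_univ_of_forall fun a => h.elim a⟩

theorem StartsBeforeTermination.exists_not_mem_T {P : PreIpomset σ} (h : P.StartsBeforeTermination)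
    (hP : ¬ P.IsIdentity) : ∃ p, p ∉ P.T := by
  obtain ⟨x⟩ := not_isEmpty_iff.1 fun he => hP (IsIdentity.of_isEmpty he)
  obtain ⟨p, hp, -⟩ := h x
  exact ⟨p, hp⟩

/-! ### Restrictions and cuts -/

def part (R : PreIpomset σ) (C S T : Set R.carrier) : PreIpomset σ where
  carrier := C
  fin := by have := R.fin; exact inferInstance
  lt a b := R.lt a b
  evord a b := R.evord a b
  S := Subtype.val ⁻¹' S
  T := Subtype.val ⁻¹' T
  lab a := R.lab a

abbrev lowerPart (R : PreIpomset σ) (A B : Set R.carrier) : PreIpomset σ := R.part A R.S B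

abbrev upperPart (R : PreIpomset σ) (A B : Set R.carrier) : PreIpomset σ := R.part B A R.T

structure IsPart (P R : PreIpomset σ) (i : P.carrier → R.carrier) (C S T : Set R.carrier) :
    Prop where
  injective : Function.Injective i
  range_eq : Set.range i = C
  lt_iff : ∀ x y, P.lt x y ↔ R.lt (i x) (i y)
  evord_iff : ∀ x y, P.evord x y ↔ R.evord (i x) (i y)
  mem_S_iff : ∀ x, x ∈ P.S ↔ i x ∈ S
  mem_T_iff : ∀ x, x ∈ P.T ↔ i x ∈ T
  lab_eq : ∀ x, R.lab (i x) = P.lab x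

section IsPart

variable {P P' Q R : PreIpomset σ} {i : P.carrier → R.carrier} {C S T : Set R.carrier}

theorem isPart_val (R : PreIpomset σ) (C S T : Set R.carrier) :
    IsPart (R.part C S T) R Subtype.val C S T :=
  ⟨Subtype.val_injective, Subtype.range_coe, fun _ _ => Iff.rfl, fun _ _ => Iff.rfl,
    fun _ => Iff.rfl, fun _ => Iff.rfl, fun _ => rfl⟩

theorem IsPart.iso_part (h : IsPart P R i C S T) : Iso P (R.part C S T) :=
  ⟨(Equiv.ofInjective i h.injective).trans (Equiv.setCongr h.range_eq), h.lt_iff, h.evord_iff,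
    h.mem_S_iff, h.mem_T_iff, h.lab_eq⟩

theorem IsPart.iso {i' : P'.carrier → R.carrier} (h : IsPart P R i C S T)
    (h' : IsPart P' R i' C S T) : Iso P P' :=
  h.iso_part.trans h'.iso_part.symm

theorem IsPart.mem (h : IsPart P R i C S T) (x : P.carrier) : i x ∈ C :=
  h.range_eq ▸ Set.mem_range_self x

theorem IsPart.exists_eq (h : IsPart P R i C S T) {r : R.carrier}
    (hr : r ∈ C) : ∃ x, i x = r := by
  rwa [← h.range_eq] at hr

theorem IsPart.congr {C' S' T' : Set R.carrier} (h : IsPart P R i C S T) (hC : C = C')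
    (hS : ∀ r ∈ C, r ∈ S ↔ r ∈ S') (hT : ∀ r ∈ C, r ∈ T ↔ r ∈ T') : IsPart P R i C' S' T' :=
  ⟨h.injective, h.range_eq.trans hC, h.lt_iff, h.evord_iff,
    fun x => (h.mem_S_iff x).trans (hS _ (h.mem x)),
    fun x => (h.mem_T_iff x).trans (hT _ (h.mem x)), h.lab_eq⟩

theorem IsPart.comp {j : Q.carrier → R.carrier} {C' S' T' : Set R.carrier}
    {D U V : Set Q.carrier} {i : P.carrier → Q.carrier} (h : IsPart P Q i D U V)
    (h' : IsPart Q R j C' S' T') (hS : ∀ x, i x ∈ U ↔ j (i x) ∈ S)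
    (hT : ∀ x, i x ∈ V ↔ j (i x) ∈ T) : IsPart P R (j ∘ i) (j '' D) S T :=
  ⟨h'.injective.comp h.injective, by rw [Set.range_comp, h.range_eq],
    fun x y => (h.lt_iff x y).trans (h'.lt_iff _ _),
    fun x y => (h.evord_iff x y).trans (h'.evord_iff _ _),
    fun x => (h.mem_S_iff x).trans (hS x), fun x => (h.mem_T_iff x).trans (hT x),
    fun x => (h'.lab_eq _).trans (h.lab_eq x)⟩

theorem IsPart.codRestrict {C' : Set R.carrier} (h : IsPart P R i C S T) (hC : C ⊆ C')
    (S' T' : Set R.carrier) :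
    IsPart P (R.part C' S' T') (Set.codRestrict i C' fun x => hC (h.mem x))
      (Subtype.val ⁻¹' C) (Subtype.val ⁻¹' S) (Subtype.val ⁻¹' T) := by
  refine ⟨?_, ?_, h.lt_iff, h.evord_iff, h.mem_S_iff, h.mem_T_iff, h.lab_eq⟩
  · exact fun x y hxy => h.injective (congrArg Subtype.val hxy)
  · ext ⟨r, hr⟩
    refine ⟨fun ⟨x, hx⟩ => hx ▸ h.mem x, fun hrC => ?_⟩
    obtain ⟨x, rfl⟩ := h.range_eq.symm ▸ hrC
    exact ⟨x, rfl⟩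

theorem Iso.exists_isPart (h : Iso P R) : ∃ f, IsPart P R f Set.univ R.S R.T :=
  let ⟨f, hlt, hev, hS, hT, hlab⟩ := h
  ⟨f, ⟨f.injective, Set.range_eq_univ.2 f.surjective, hlt, hev, hS, hT, hlab⟩⟩

theorem IsPart.iso_of_univ (h : IsPart P R i Set.univ R.S R.T) : Iso P R :=
  ⟨Equiv.ofBijective i ⟨h.injective, Set.range_eq_univ.1 h.range_eq⟩, h.lt_iff, h.evord_iff,
    h.mem_S_iff, h.mem_T_iff, h.lab_eq⟩

end IsPart

/-- `(A, B)` splits `R` as the gluing of `R.lowerPart A B` and `R.upperPart A B`, which share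
the interface `A ∩ B`. -/
structure IsCut (R : PreIpomset σ) (A B : Set R.carrier) : Prop where
  cover : ∀ r, r ∈ A ∨ r ∈ B
  S_subset : R.S ⊆ A
  T_subset : R.T ⊆ B
  lt_of_mem : ∀ a b, a ∈ A → a ∉ B → b ∈ B → b ∉ A → R.lt a b
  not_lt : ∀ a b, a ∈ B → a ∉ A → b ∈ A → ¬ R.lt a b
  not_lt_of_mem_inter : ∀ a b, a ∈ A → a ∈ B → b ∈ A → b ∈ B → ¬ R.lt a b
  evord_mem : ∀ a b, R.evord a b → (a ∈ A ∧ b ∈ A) ∨ (a ∈ B ∧ b ∈ B)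

section IsCut

variable {R : PreIpomset σ} {A B : Set R.carrier}

theorem IsCut.part {C S T : Set R.carrier} (h : IsCut R A B) (hS : ∀ r ∈ C, r ∈ S → r ∈ A)
    (hT : ∀ r ∈ C, r ∈ T → r ∈ B) :
    IsCut (R.part C S T) (Subtype.val ⁻¹' A) (Subtype.val ⁻¹' B) :=
  ⟨fun r => h.cover r.1, fun r hr => hS r.1 r.2 hr, fun r hr => hT r.1 r.2 hr,
    fun a b => h.lt_of_mem a.1 b.1, fun a b => h.not_lt a.1 b.1,
    fun a b => h.not_lt_of_mem_inter a.1 b.1, fun a b => h.evord_mem a.1 b.1⟩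

theorem IsCut.lift {A₁ B₁ : Set A} (h : IsCut R A B) (h₁ : IsCut (R.lowerPart A B) A₁ B₁) :
    IsCut R (Subtype.val '' A₁) (Subtype.val '' B₁ ∪ B) := by
  have hT : ∀ a : A, a.1 ∈ B → a ∈ B₁ := fun a ha => h₁.T_subset ha
  have mem : ∀ (s : Set A) r, r ∈ Subtype.val '' s ↔ ∃ h : r ∈ A, ⟨r, h⟩ ∈ s := by simp
  have mem_B₁ : ∀ a : A, a ∉ A₁ → a ∈ B₁ := fun a ha => (h₁.cover a).resolve_left ha
  refine ⟨fun r => ?_, fun r hr => ⟨⟨r, h.S_subset hr⟩, h₁.S_subset hr, rfl⟩,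
    fun r hr => Or.inr (h.T_subset hr), fun a b ha hab hb hba => ?_, fun a b ha haA₁ hb => ?_,
    fun a b ha ha' hb hb' => ?_, fun a b hab => ?_⟩
  · by_cases hr : r ∈ A
    · rcases h₁.cover ⟨r, hr⟩ with h' | h'
      exacts [Or.inl ((mem _ _).2 ⟨hr, h'⟩), Or.inr (Or.inl ((mem _ _).2 ⟨hr, h'⟩))]
    · exact Or.inr (Or.inr ((h.cover r).resolve_left hr))
  · obtain ⟨⟨a, haA⟩, ha₁, rfl⟩ := ha
    have haB₁ : ⟨a, haA⟩ ∉ B₁ := fun h' => hab (Or.inl ⟨_, h', rfl⟩)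
    have haB : a ∉ B := fun h' => hab (Or.inr h')
    by_cases hbA : b ∈ A
    · have hbA₁ : ⟨b, hbA⟩ ∉ A₁ := fun h' => hba ⟨_, h', rfl⟩
      exact h₁.lt_of_mem ⟨a, haA⟩ ⟨b, hbA⟩ ha₁ haB₁ (mem_B₁ _ hbA₁) hbA₁
    · exact h.lt_of_mem a b haA haB ((h.cover b).resolve_left hbA) hbA
  · obtain ⟨⟨b, hbA⟩, hb₁, rfl⟩ := hb
    by_cases haA : a ∈ A
    · have haA₁ : ⟨a, haA⟩ ∉ A₁ := fun h' => haA₁ ⟨_, h', rfl⟩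
      exact h₁.not_lt ⟨a, haA⟩ ⟨b, hbA⟩ (mem_B₁ _ haA₁) haA₁ hb₁
    · exact h.not_lt a b ((h.cover a).resolve_left haA) haA hbA
  · obtain ⟨⟨a, haA⟩, ha₁, rfl⟩ := ha
    obtain ⟨⟨b, hbA⟩, hb₁, rfl⟩ := hb
    have inB₁ : ∀ (r : R.carrier) (hr : r ∈ A), r ∈ Subtype.val '' B₁ ∪ B → ⟨r, hr⟩ ∈ B₁ := by
      rintro r hr (h' | h')
      exacts [((mem _ _).1 h').2, hT ⟨r, hr⟩ h']
    exact h₁.not_lt_of_mem_inter ⟨a, haA⟩ ⟨b, hbA⟩ ha₁ (inB₁ a haA ha') hb₁ (inB₁ b hbA hb')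
  · rcases h.evord_mem a b hab with ⟨ha, hb⟩ | ⟨ha, hb⟩
    · rcases h₁.evord_mem ⟨a, ha⟩ ⟨b, hb⟩ hab with ⟨ha₁, hb₁⟩ | ⟨ha₁, hb₁⟩
      · exact Or.inl ⟨⟨_, ha₁, rfl⟩, ⟨_, hb₁, rfl⟩⟩
      · exact Or.inr ⟨Or.inl ⟨_, ha₁, rfl⟩, Or.inl ⟨_, hb₁, rfl⟩⟩
    · exact Or.inr ⟨Or.inr ha, Or.inr hb⟩

end IsCut

/-! ### Gluings described by their insertions -/

/-- `i` and `j` exhibit `R` as the gluing `P * Q`: this describes `glue` through its two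
insertions, independently of the choice of carrier. -/
structure IsGluing (P Q R : PreIpomset σ) (i : P.carrier → R.carrier)
    (j : Q.carrier → R.carrier) : Prop where
  injective_left : Function.Injective i
  injective_right : Function.Injective j
  cover : ∀ r, (∃ x, i x = r) ∨ ∃ y, j y = r
  mem_T_of_eq : ∀ x y, i x = j y → x ∈ P.T
  mem_S_of_eq : ∀ x y, i x = j y → y ∈ Q.S
  exists_right : ∀ x ∈ P.T, ∃ y, j y = i x
  exists_left : ∀ y ∈ Q.S, ∃ x, i x = j y
  lt_iff : ∀ u v, R.lt u v ↔
    (∃ x x', i x = u ∧ i x' = v ∧ P.lt x x') ∨ (∃ y y', j y = u ∧ j y' = v ∧ Q.lt y y') ∨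
      ((∃ x, i x = u ∧ x ∉ P.T) ∧ ∃ y, j y = v ∧ y ∉ Q.S)
  evord_iff : ∀ u v, R.evord u v ↔
    (∃ x x', i x = u ∧ i x' = v ∧ P.evord x x') ∨ ∃ y y', j y = u ∧ j y' = v ∧ Q.evord y y'
  evord_compat : ∀ x x' y y', i x = j y → i x' = j y' → (P.evord x x' ↔ Q.evord y y')
  mem_S_iff : ∀ u, u ∈ R.S ↔ ∃ x, i x = u ∧ x ∈ P.S
  mem_T_iff : ∀ u, u ∈ R.T ↔ ∃ y, j y = u ∧ y ∈ Q.T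
  lab_left : ∀ x, R.lab (i x) = P.lab x
  lab_right : ∀ y, R.lab (j y) = Q.lab y

section Glue

variable {P Q : PreIpomset σ} (m : Matching P Q)

noncomputable def glueRight (y : Q.carrier) : P.carrier ⊕ {y : Q.carrier // y ∉ Q.S} :=
  if h : y ∈ Q.S then Sum.inl (m.g.symm ⟨y, h⟩).val else Sum.inr ⟨y, h⟩

theorem gluePOf_eq_some_iff (u : P.carrier ⊕ {y : Q.carrier // y ∉ Q.S}) (x : P.carrier) :
    gluePOf P Q u = some x ↔ Sum.inl x = u := by
  cases u <;> simp [gluePOf, eq_comm]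

theorem inl_eq_glueRight_iff (x : P.carrier) (y : Q.carrier) :
    Sum.inl x = glueRight m y ↔ ∃ h : x ∈ P.T, (m.g ⟨x, h⟩).val = y := by
  unfold glueRight
  split_ifs with hy
  · refine ⟨fun h => ?_, fun ⟨hx, hxy⟩ => ?_⟩
    · cases Sum.inl_injective h
      exact ⟨(m.g.symm ⟨y, hy⟩).2, by simp⟩
    · rw [m.g.symm_apply_eq.2 (Subtype.ext hxy).symm]
  · exact iff_of_false (by simp) fun ⟨hx, hxy⟩ => hy (hxy ▸ (m.g ⟨x, hx⟩).2)

theorem glueQOf_eq_some_iff (u : P.carrier ⊕ {y : Q.carrier // y ∉ Q.S}) (y : Q.carrier) :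
    glueQOf P Q m u = some y ↔ glueRight m y = u := by
  cases u with
  | inl x =>
    rw [show glueRight m y = Sum.inl x ↔ Sum.inl x = glueRight m y from eq_comm,
      inl_eq_glueRight_iff]
    by_cases hx : x ∈ P.T <;> simp [glueQOf, hx]
  | inr z =>
    simp only [glueQOf, Option.some.injEq, glueRight]
    split_ifs with hy
    · exact iff_of_false (fun h => z.2 (h ▸ hy)) (by simp)
    · exact ⟨fun h => by subst h; rfl, fun h => congrArg Subtype.val (Sum.inr_injective h).symm⟩

theorem isGluing_glue : IsGluing P Q (glue P Q m) Sum.inl (glueRight m) where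
  injective_left := Sum.inl_injective
  injective_right y y' h := by
    have := (glueQOf_eq_some_iff m _ y).2 h
    rwa [(glueQOf_eq_some_iff m _ y').2 rfl, Option.some_inj, eq_comm] at this
  cover
    | Sum.inl x => Or.inl ⟨x, rfl⟩
    | Sum.inr z => Or.inr ⟨z.val, (glueQOf_eq_some_iff m _ _).1 rfl⟩
  mem_T_of_eq x y h := ((inl_eq_glueRight_iff m x y).1 h).1
  mem_S_of_eq x y h := by
    obtain ⟨hx, rfl⟩ := (inl_eq_glueRight_iff m x y).1 h
    exact (m.g ⟨x, hx⟩).2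
  exists_right x hx := ⟨_, ((inl_eq_glueRight_iff m x _).2 ⟨hx, rfl⟩).symm⟩
  exists_left y hy := ⟨_, (inl_eq_glueRight_iff m _ y).2 ⟨(m.g.symm ⟨y, hy⟩).2, by simp⟩⟩
  lt_iff := fun (u v : P.carrier ⊕ _) => by
    simp only [glue, gluePOf_eq_some_iff, glueQOf_eq_some_iff]
  evord_iff := fun (u v : P.carrier ⊕ _) => by
    simp only [glue, gluePOf_eq_some_iff, glueQOf_eq_some_iff]
  evord_compat x x' y y' h h' := by
    obtain ⟨hx, rfl⟩ := (inl_eq_glueRight_iff m x y).1 h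
    obtain ⟨hx', rfl⟩ := (inl_eq_glueRight_iff m x' y').1 h'
    exact m.evord_iff ⟨x, hx⟩ ⟨x', hx'⟩
  mem_S_iff := fun (u : P.carrier ⊕ _) => by
    show (∃ x, gluePOf P Q u = some x ∧ x ∈ P.S) ↔ _
    simp only [gluePOf_eq_some_iff]
    rfl
  mem_T_iff := fun (u : P.carrier ⊕ _) => by
    show (∃ y, glueQOf P Q m u = some y ∧ y ∈ Q.T) ↔ _
    simp only [glueQOf_eq_some_iff]
    rfl
  lab_left _ := rfl
  lab_right y := by
    unfold glueRight
    split_ifs with hy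
    · exact (by simpa using (m.lab_eq (m.g.symm ⟨y, hy⟩)).symm : P.lab _ = Q.lab y)
    · rfl

end Glue

section Gluing

variable {P Q R R' E : PreIpomset σ} {i : P.carrier → R.carrier}
  {j : Q.carrier → R.carrier}

namespace IsGluing

theorem exists_of_iso (h : IsGluing P Q R i j) (hR : Iso R R') :
    ∃ i' j', IsGluing P Q R' i' j' := by
  obtain ⟨f, hlt, hev, hS, hT, hlab⟩ := hR
  refine ⟨f ∘ i, f ∘ j, ⟨f.injective.comp h.injective_left, f.injective.comp h.injective_right,
    fun r => ?_, fun x y hxy => h.mem_T_of_eq x y (f.injective hxy),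
    fun x y hxy => h.mem_S_of_eq x y (f.injective hxy),
    fun x hx => (h.exists_right x hx).imp fun _ hy => congrArg f hy,
    fun y hy => (h.exists_left y hy).imp fun _ hx => congrArg f hx, fun u v => ?_, fun u v => ?_,
    fun x x' y y' hxy hxy' => h.evord_compat x x' y y' (f.injective hxy) (f.injective hxy'),
    fun u => ?_, fun u => ?_, fun x => (hlab _).trans (h.lab_left x),
    fun y => (hlab _).trans (h.lab_right y)⟩⟩
  · obtain ⟨r, rfl⟩ := f.surjective r
    simpa only [Function.comp, f.injective.eq_iff] using h.cover r
  · obtain ⟨u, rfl⟩ := f.surjective u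
    obtain ⟨v, rfl⟩ := f.surjective v
    simpa only [Function.comp, f.injective.eq_iff, ← hlt] using h.lt_iff u v
  · obtain ⟨u, rfl⟩ := f.surjective u
    obtain ⟨v, rfl⟩ := f.surjective v
    simpa only [Function.comp, f.injective.eq_iff, ← hev] using h.evord_iff u v
  · obtain ⟨u, rfl⟩ := f.surjective u
    simpa only [Function.comp, f.injective.eq_iff, ← hS] using h.mem_S_iff u
  · obtain ⟨u, rfl⟩ := f.surjective u
    simpa only [Function.comp, f.injective.eq_iff, ← hT] using h.mem_T_iff u

theorem iso {i' : P.carrier → R'.carrier} {j' : Q.carrier → R'.carrier} (h : IsGluing P Q R i j)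
    (h' : IsGluing P Q R' i' j') (hij : ∀ x y, i x = j y ↔ i' x = j' y) : Iso R R' := by
  obtain ⟨φ, hφi, hφj⟩ :=
    exists_extend_of_injective h.injective_left h.injective_right h.cover fun x y => (hij x y).1
  obtain ⟨ψ, hψi, hψj⟩ :=
    exists_extend_of_injective h'.injective_left h'.injective_right h'.cover fun x y => (hij x y).2
  let e : R.carrier ≃ R'.carrier :=
    ⟨φ, ψ, fun r => by rcases h.cover r with ⟨x, rfl⟩ | ⟨y, rfl⟩ <;> simp [hφi, hψi, hφj, hψj],
      fun r => by rcases h'.cover r with ⟨x, rfl⟩ | ⟨y, rfl⟩ <;> simp [hφi, hψi, hφj, hψj]⟩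
  have hi : ∀ x u, i' x = e u ↔ i x = u := fun x u => by
    rw [← hφi x]; exact e.injective.eq_iff
  have hj : ∀ y u, j' y = e u ↔ j y = u := fun y u => by
    rw [← hφj y]; exact e.injective.eq_iff
  refine ⟨e, fun u v => ?_, fun u v => ?_, fun u => ?_, fun u => ?_, fun u => ?_⟩
  · simp only [h.lt_iff, h'.lt_iff, hi, hj]
  · simp only [h.evord_iff, h'.evord_iff, hi, hj]
  · simp only [h.mem_S_iff, h'.mem_S_iff, hi]
  · simp only [h.mem_T_iff, h'.mem_T_iff, hj]
  · rcases h.cover u with ⟨x, rfl⟩ | ⟨y, rfl⟩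
    · exact ((congrArg R'.lab (hφi x)).trans (h'.lab_left x)).trans (h.lab_left x).symm
    · exact ((congrArg R'.lab (hφj y)).trans (h'.lab_right y)).trans (h.lab_right y).symm

theorem exists_matching (h : IsGluing P Q R i j) :
    ∃ m : Matching P Q, ∀ x y, Sum.inl x = glueRight m y ↔ i x = j y := by
  choose k hk using h.exists_right
  let g : {x // x ∈ P.T} → {y // y ∈ Q.S} :=
    fun x => ⟨k x x.2, h.mem_S_of_eq x _ (hk x x.2).symm⟩
  have hg : Function.Bijective g := by
    refine ⟨fun x x' hxx' => Subtype.ext (h.injective_left ?_), fun y => ?_⟩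
    · rw [← hk x x.2, ← hk x' x'.2]
      exact congrArg (j ∘ Subtype.val) hxx'
    · obtain ⟨x, hx⟩ := h.exists_left y y.2
      have hxT := h.mem_T_of_eq x y hx
      exact ⟨⟨x, hxT⟩, Subtype.ext (h.injective_right ((hk x hxT).trans hx))⟩
  refine ⟨⟨Equiv.ofBijective g hg,
    fun x x' => h.evord_compat _ _ _ _ (hk x x.2).symm (hk x' x'.2).symm, fun x => ?_⟩,
    fun x y => ?_⟩
  · show Q.lab (k x x.2) = P.lab x
    rw [← h.lab_right, hk x x.2, h.lab_left]
  · rw [inl_eq_glueRight_iff]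
    constructor
    · rintro ⟨hx, rfl⟩
      exact (hk x hx).symm
    · exact fun hxy => ⟨h.mem_T_of_eq x y hxy, h.injective_right ((hk x _).trans hxy)⟩

theorem glueRel (h : IsGluing P Q R i j) : GlueRel P Q R :=
  let ⟨m, hm⟩ := h.exists_matching
  ⟨m, (isGluing_glue m).iso h hm⟩

theorem evord_left (h : IsGluing P Q R i j) (x x' : P.carrier) :
    R.evord (i x) (i x') ↔ P.evord x x' := by
  rw [h.evord_iff]
  refine ⟨?_, fun hev => Or.inl ⟨x, x', rfl, rfl, hev⟩⟩
  rintro (⟨a, a', ha, ha', hev⟩ | ⟨b, b', hb, hb', hev⟩)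
  · rwa [h.injective_left ha, h.injective_left ha'] at hev
  · exact (h.evord_compat x x' b b' hb.symm hb'.symm).2 hev

theorem evord_right (h : IsGluing P Q R i j) (y y' : Q.carrier) :
    R.evord (j y) (j y') ↔ Q.evord y y' := by
  rw [h.evord_iff]
  refine ⟨?_, fun hev => Or.inr ⟨y, y', rfl, rfl, hev⟩⟩
  rintro (⟨a, a', ha, ha', hev⟩ | ⟨b, b', hb, hb', hev⟩)
  · exact (h.evord_compat a a' y y' ha ha').1 hev
  · rwa [h.injective_right hb, h.injective_right hb'] at hev

theorem isPart_left (h : IsGluing P Q R i j) (hQ : Q.SourcesMinimal) :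
    IsPart P R i (Set.range i) R.S (Set.range j) := by
  refine ⟨h.injective_left, rfl, fun x x' => ?_, fun x x' => (h.evord_left x x').symm,
    fun x => ?_, fun x => ⟨h.exists_right x, fun ⟨y, hy⟩ => h.mem_T_of_eq x y hy.symm⟩,
    h.lab_left⟩
  · rw [h.lt_iff]
    refine ⟨fun hlt => Or.inl ⟨x, x', rfl, rfl, hlt⟩, ?_⟩
    rintro (⟨a, a', ha, ha', hlt⟩ | ⟨b, b', -, hb', hlt⟩ | ⟨-, b, hb, hbS⟩)
    · rwa [h.injective_left ha, h.injective_left ha'] at hlt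
    · exact absurd hlt (hQ b' (h.mem_S_of_eq x' b' hb'.symm) b)
    · exact absurd (h.mem_S_of_eq x' b hb.symm) hbS
  · rw [h.mem_S_iff]
    exact ⟨fun hx => ⟨x, rfl, hx⟩, fun ⟨a, ha, hS⟩ => h.injective_left ha ▸ hS⟩

theorem isPart_right (h : IsGluing P Q R i j) (hP : P.TargetsMaximal) :
    IsPart Q R j (Set.range j) (Set.range i) R.T := by
  refine ⟨h.injective_right, rfl, fun y y' => ?_, fun y y' => (h.evord_right y y').symm,
    fun y => ⟨h.exists_left y, fun ⟨x, hx⟩ => h.mem_S_of_eq x y hx⟩, fun y => ?_,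
    h.lab_right⟩
  · rw [h.lt_iff]
    refine ⟨fun hlt => Or.inr (Or.inl ⟨y, y', rfl, rfl, hlt⟩), ?_⟩
    rintro (⟨a, a', ha, -, hlt⟩ | ⟨b, b', hb, hb', hlt⟩ | ⟨⟨a, ha, haT⟩, -⟩)
    · exact absurd hlt (hP a (h.mem_T_of_eq a y ha) a')
    · rwa [h.injective_right hb, h.injective_right hb'] at hlt
    · exact absurd (h.mem_T_of_eq a y ha) haT
  · rw [h.mem_T_iff]
    exact ⟨fun hy => ⟨y, rfl, hy⟩, fun ⟨b, hb, hT⟩ => h.injective_right hb ▸ hT⟩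

theorem isCut (h : IsGluing P Q R i j) (hP : P.TargetsMaximal) (hQ : Q.SourcesMinimal) :
    IsCut R (Set.range i) (Set.range j) := by
  refine ⟨h.cover, fun r hr => ?_, fun r hr => ?_, ?_, ?_, ?_, fun a b hab => ?_⟩
  · obtain ⟨x, hx, -⟩ := (h.mem_S_iff r).1 hr
    exact ⟨x, hx⟩
  · obtain ⟨y, hy, -⟩ := (h.mem_T_iff r).1 hr
    exact ⟨y, hy⟩
  · rintro - - ⟨x, rfl⟩ hxj ⟨y, rfl⟩ hyi
    exact (h.lt_iff _ _).2 (Or.inr (Or.inr ⟨⟨x, rfl, fun hx => hxj (h.exists_right x hx)⟩,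
      ⟨y, rfl, fun hy => hyi (h.exists_left y hy)⟩⟩))
  · rintro - - ⟨y, rfl⟩ hyi ⟨x, rfl⟩ hlt
    rcases (h.lt_iff _ _).1 hlt with ⟨a, -, ha, -, -⟩ | ⟨b, b', -, hb', hlt⟩ | ⟨⟨a, ha, -⟩, -⟩
    · exact hyi ⟨a, ha⟩
    · exact hQ b' (h.mem_S_of_eq x b' hb'.symm) b hlt
    · exact hyi ⟨a, ha⟩
  · rintro - - ⟨x, rfl⟩ ⟨y, hy⟩ ⟨x', rfl⟩ - hlt
    rcases (h.lt_iff _ _).1 hlt with ⟨a, a', ha, -, hlt⟩ | ⟨b, b', -, hb', hlt⟩ | ⟨⟨a, ha, haT⟩, -⟩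
    · exact hP a (h.mem_T_of_eq a y (ha.trans hy.symm)) a' hlt
    · exact hQ b' (h.mem_S_of_eq x' b' hb'.symm) b hlt
    · exact haT (h.mem_T_of_eq a y (ha.trans hy.symm))
  · exact ((h.evord_iff a b).1 hab).imp (fun ⟨x, x', hx, hx', _⟩ => ⟨⟨x, hx⟩, ⟨x', hx'⟩⟩)
      fun ⟨y, y', hy, hy', _⟩ => ⟨⟨y, hy⟩, ⟨y', hy'⟩⟩

theorem sourcesMinimal (h : IsGluing P Q R i j) (hP : P.Discrete) (hQ : Q.SourcesMinimal) :
    R.SourcesMinimal := by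
  intro r hr r' hlt
  obtain ⟨x, rfl, -⟩ := (h.mem_S_iff r).1 hr
  rcases (h.lt_iff _ _).1 hlt with ⟨a, a', -, -, hlt⟩ | ⟨b, b', -, hb', hlt⟩ | ⟨-, b, hb, hbS⟩
  · exact hP a a' hlt
  · exact hQ b' (h.mem_S_of_eq x b' hb'.symm) b hlt
  · exact hbS (h.mem_S_of_eq x b hb.symm)

theorem targetsMaximal (h : IsGluing P Q R i j) (hP : P.Discrete) (hQ : Q.TargetsMaximal) :
    R.TargetsMaximal := by
  intro r hr r' hlt
  obtain ⟨y, rfl, hyT⟩ := (h.mem_T_iff r).1 hr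
  rcases (h.lt_iff _ _).1 hlt with ⟨a, a', -, -, hlt⟩ | ⟨b, b', hb, -, hlt⟩ | ⟨⟨a, ha, haT⟩, -⟩
  · exact hP a a' hlt
  · exact hQ b (h.injective_right hb ▸ hyT) b' hlt
  · exact haT (h.mem_T_of_eq a y ha)

theorem startsBeforeTermination (h : IsGluing P Q R i j) (hP : P.Discrete)
    (hQ : Q.StartsBeforeTermination) : R.StartsBeforeTermination := by
  intro q
  by_cases hq : ∃ y, j y = q
  · obtain ⟨y, rfl⟩ := hq
    obtain ⟨y', hy'T, hlt⟩ := hQ y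
    refine ⟨j y', fun hT => ?_, fun hlt' => ?_⟩
    · obtain ⟨b, hb, hbT⟩ := (h.mem_T_iff _).1 hT
      exact hy'T (h.injective_right hb ▸ hbT)
    · rcases (h.lt_iff _ _).1 hlt' with ⟨a, a', -, -, hlt'⟩ | ⟨b, b', hb, hb', hlt'⟩ |
        ⟨⟨a, ha, haT⟩, -⟩
      · exact hP a a' hlt'
      · exact hlt (h.injective_right hb ▸ h.injective_right hb' ▸ hlt')
      · exact haT (h.mem_T_of_eq a y' ha)
  · refine ⟨q, fun hT => hq ?_, fun hlt => ?_⟩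
    · obtain ⟨y, hy, -⟩ := (h.mem_T_iff q).1 hT
      exact ⟨y, hy⟩
    · rcases (h.lt_iff _ _).1 hlt with ⟨a, a', -, -, hlt⟩ | ⟨b, -, hb, -, -⟩ | ⟨-, b, hb, -⟩
      · exact hP a a' hlt
      · exact hq ⟨b, hb⟩
      · exact hq ⟨b, hb⟩

theorem isPart_source (h : IsGluing P Q R i j) (hR : R.SourcesMinimal) (hE : E.Discrete)
    {e : E.carrier → P.carrier} (he : IsPart E.idOf P e P.S Set.univ Set.univ) :
    IsPart E.idOf R (i ∘ e) R.S Set.univ Set.univ := by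
  have hS : Set.range (i ∘ e) = R.S := by
    ext r
    rw [h.mem_S_iff]
    constructor
    · rintro ⟨a, rfl⟩
      exact ⟨e a, rfl, he.mem a⟩
    · rintro ⟨x, rfl, hx⟩
      obtain ⟨a, rfl⟩ := he.exists_eq hx
      exact ⟨a, rfl⟩
  refine ⟨h.injective_left.comp he.injective, hS,
    fun a b => iff_of_false (hE a b) (hR _ (hS ▸ Set.mem_range_self b) _),
    fun a b => (he.evord_iff a b).trans (h.evord_left _ _).symm,
    fun _ => iff_of_true trivial trivial, fun _ => iff_of_true trivial trivial,
    fun a => (h.lab_left _).trans (he.lab_eq a)⟩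

end IsGluing

theorem GlueRel.exists_isGluing (h : GlueRel P Q R) : ∃ i j, IsGluing P Q R i j :=
  let ⟨m, hm⟩ := h
  (isGluing_glue m).exists_of_iso hm

theorem IsCut.lt_iff {A B : Set R.carrier} (hc : IsCut R A B) (hi : IsPart P R i A R.S B)
    (hj : IsPart Q R j B A R.T) (u v : R.carrier) : R.lt u v ↔
      (∃ x x', i x = u ∧ i x' = v ∧ P.lt x x') ∨ (∃ y y', j y = u ∧ j y' = v ∧ Q.lt y y') ∨
        ((∃ x, i x = u ∧ x ∉ P.T) ∧ ∃ y, j y = v ∧ y ∉ Q.S) := by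
  refine ⟨fun huv => ?_, ?_⟩
  · have in_A : u ∈ A → v ∈ A → ∃ x x', i x = u ∧ i x' = v ∧ P.lt x x' := fun hu hv => by
      obtain ⟨x, rfl⟩ := hi.exists_eq hu
      obtain ⟨x', rfl⟩ := hi.exists_eq hv
      exact ⟨x, x', rfl, rfl, (hi.lt_iff x x').2 huv⟩
    have in_B : u ∈ B → v ∈ B → ∃ y y', j y = u ∧ j y' = v ∧ Q.lt y y' := fun hu hv => by
      obtain ⟨y, rfl⟩ := hj.exists_eq hu
      obtain ⟨y', rfl⟩ := hj.exists_eq hv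
      exact ⟨y, y', rfl, rfl, (hj.lt_iff y y').2 huv⟩
    have hvB : v ∉ A → v ∈ B := (hc.cover v).resolve_left
    by_cases huA : u ∈ A
    · by_cases hvA : v ∈ A
      · exact Or.inl (in_A huA hvA)
      by_cases huB : u ∈ B
      · exact Or.inr (Or.inl (in_B huB (hvB hvA)))
      obtain ⟨x, rfl⟩ := hi.exists_eq huA
      obtain ⟨y, rfl⟩ := hj.exists_eq (hvB hvA)
      exact Or.inr (Or.inr ⟨⟨x, rfl, fun hx => huB ((hi.mem_T_iff x).1 hx)⟩,
        ⟨y, rfl, fun hy => hvA ((hj.mem_S_iff y).1 hy)⟩⟩)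
    · have huB := (hc.cover u).resolve_left huA
      by_cases hvA : v ∈ A
      · exact absurd huv (hc.not_lt u v huB huA hvA)
      · exact Or.inr (Or.inl (in_B huB (hvB hvA)))
  · rintro (⟨x, x', rfl, rfl, hlt⟩ | ⟨y, y', rfl, rfl, hlt⟩ | ⟨⟨x, rfl, hx⟩, ⟨y, rfl, hy⟩⟩)
    · exact (hi.lt_iff x x').1 hlt
    · exact (hj.lt_iff y y').1 hlt
    · exact hc.lt_of_mem _ _ (hi.mem x) (fun h => hx ((hi.mem_T_iff x).2 h)) (hj.mem y)
        fun h => hy ((hj.mem_S_iff y).2 h)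

theorem IsCut.evord_iff {A B : Set R.carrier} (hc : IsCut R A B) (hi : IsPart P R i A R.S B)
    (hj : IsPart Q R j B A R.T) (u v : R.carrier) : R.evord u v ↔
      (∃ x x', i x = u ∧ i x' = v ∧ P.evord x x') ∨
        ∃ y y', j y = u ∧ j y' = v ∧ Q.evord y y' := by
  refine ⟨fun huv => ?_, ?_⟩
  · rcases hc.evord_mem u v huv with ⟨hu, hv⟩ | ⟨hu, hv⟩
    · obtain ⟨x, rfl⟩ := hi.exists_eq hu
      obtain ⟨x', rfl⟩ := hi.exists_eq hv
      exact Or.inl ⟨x, x', rfl, rfl, (hi.evord_iff x x').2 huv⟩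
    · obtain ⟨y, rfl⟩ := hj.exists_eq hu
      obtain ⟨y', rfl⟩ := hj.exists_eq hv
      exact Or.inr ⟨y, y', rfl, rfl, (hj.evord_iff y y').2 huv⟩
  · rintro (⟨x, x', rfl, rfl, hev⟩ | ⟨y, y', rfl, rfl, hev⟩)
    exacts [(hi.evord_iff x x').1 hev, (hj.evord_iff y y').1 hev]

theorem IsCut.isGluing {A B : Set R.carrier} (hc : IsCut R A B) (hi : IsPart P R i A R.S B)
    (hj : IsPart Q R j B A R.T) : IsGluing P Q R i j := by
  refine ⟨hi.injective, hj.injective, fun r => (hc.cover r).imp hi.exists_eq hj.exists_eq,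
    fun x y hxy => (hi.mem_T_iff x).2 (hxy ▸ hj.mem y),
    fun x y hxy => (hj.mem_S_iff y).2 (hxy ▸ hi.mem x),
    fun x hx => hj.exists_eq ((hi.mem_T_iff x).1 hx),
    fun y hy => hi.exists_eq ((hj.mem_S_iff y).1 hy), hc.lt_iff hi hj, hc.evord_iff hi hj,
    fun x x' y y' hxy hxy' => ?_, fun u => ⟨fun hu => ?_, ?_⟩, fun u => ⟨fun hu => ?_, ?_⟩,
    hi.lab_eq, hj.lab_eq⟩
  · rw [hi.evord_iff, hxy, hxy', ← hj.evord_iff]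
  · obtain ⟨x, rfl⟩ := hi.exists_eq (hc.S_subset hu)
    exact ⟨x, rfl, (hi.mem_S_iff x).2 hu⟩
  · rintro ⟨x, rfl, hx⟩
    exact (hi.mem_S_iff x).1 hx
  · obtain ⟨y, rfl⟩ := hj.exists_eq (hc.T_subset hu)
    exact ⟨y, rfl, (hj.mem_T_iff y).2 hu⟩
  · rintro ⟨y, rfl, hy⟩
    exact (hj.mem_T_iff y).1 hy

theorem IsCut.glueRel {A B : Set R.carrier} (hc : IsCut R A B) (hi : IsPart P R i A R.S B)
    (hj : IsPart Q R j B A R.T) : GlueRel P Q R :=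
  (hc.isGluing hi hj).glueRel

end Gluing

section Division

variable {D M P Q R R₂ : PreIpomset σ} {C S T A B A₁ B₁ : Set R.carrier}
  {d : D.carrier → R.carrier} {k : M.carrier → R.carrier} {i : P.carrier → R.carrier}
  {j : Q.carrier → R.carrier} {r₂ : R₂.carrier → R.carrier}

namespace IsPart

theorem not_lt_of_discrete (h : IsPart P R i C S T) (hP : P.Discrete) {a b : R.carrier}
    (ha : a ∈ C) (hb : b ∈ C) : ¬ R.lt a b := by
  obtain ⟨x, rfl⟩ := h.exists_eq ha
  obtain ⟨y, rfl⟩ := h.exists_eq hb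
  exact fun hlt => hP x y ((h.lt_iff x y).2 hlt)

theorem not_lt_of_sourcesMinimal (h : IsPart P R i C S T) (hP : P.SourcesMinimal)
    {a b : R.carrier} (ha : a ∈ C) (haS : a ∈ S) (hb : b ∈ C) : ¬ R.lt b a := by
  obtain ⟨x, rfl⟩ := h.exists_eq ha
  obtain ⟨y, rfl⟩ := h.exists_eq hb
  exact fun hlt => hP x ((h.mem_S_iff x).2 haS) y ((h.lt_iff y x).2 hlt)

theorem not_lt_of_targetsMaximal (h : IsPart P R i C S T) (hP : P.TargetsMaximal)
    {a b : R.carrier} (ha : a ∈ C) (haT : a ∈ T) (hb : b ∈ C) : ¬ R.lt a b := by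
  obtain ⟨x, rfl⟩ := h.exists_eq ha
  obtain ⟨y, rfl⟩ := h.exists_eq hb
  exact fun hlt => hP x ((h.mem_T_iff x).2 haT) y ((h.lt_iff x y).2 hlt)

theorem exists_of_startsBeforeTermination (h : IsPart P R i C S T)
    (hP : P.StartsBeforeTermination) {q : R.carrier} (hq : q ∈ C) :
    ∃ p ∈ C, p ∉ T ∧ ¬ R.lt p q := by
  obtain ⟨x, rfl⟩ := h.exists_eq hq
  obtain ⟨y, hyT, hlt⟩ := hP x
  exact ⟨i y, h.mem y, fun h' => hyT ((h.mem_T_iff y).2 h'), fun h' => hlt ((h.lt_iff y x).2 h')⟩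

end IsPart

namespace IsCut

theorem glueRel_lowerPart (h₁ : IsCut R A₁ B₁) (hA : A₁ ⊆ A) (hB : B ⊆ B₁)
    (hd : IsPart D R d A₁ R.S B₁) (hk : IsPart M R k (A ∩ B₁) A₁ B)
    (hi : IsPart P R i A R.S B) : GlueRel D M P := by
  have hc := h₁.part (C := A) (S := R.S) (T := B) (fun _ _ hr => h₁.S_subset hr)
    fun _ _ hr => hB hr
  have hk' := hk.codRestrict Set.inter_subset_left R.S B
  exact (hc.glueRel (hd.codRestrict hA R.S B) (hk'.congr (Set.ext fun r => and_iff_right r.2)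
    (fun _ _ => Iff.rfl) fun _ _ => Iff.rfl)).trans_iso hi.iso_part.symm

theorem glueRel_upperPart (h : IsCut R A B) (hA : A₁ ⊆ A) (hB : B ⊆ B₁)
    (hk : IsPart M R k (A ∩ B₁) A₁ B) (hj : IsPart Q R j B A R.T)
    (hr₂ : IsPart R₂ R r₂ B₁ A₁ R.T) : GlueRel M Q R₂ := by
  have hc := h.part (C := B₁) (S := A₁) (T := R.T) (fun _ _ hr => hA hr)
    fun _ _ hr => h.T_subset hr
  have hk' := hk.codRestrict Set.inter_subset_right A₁ R.T
  exact (hc.glueRel (hk'.congr (Set.ext fun r => and_iff_left r.2) (fun _ _ => Iff.rfl)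
    fun _ _ => Iff.rfl) (hj.codRestrict hB A₁ R.T)).trans_iso hr₂.iso_part.symm

theorem lower_subset_lower (h₁ : IsCut R A₁ B₁) (h : IsCut R A B)
    (hA₁ : ∀ a ∈ A₁, ∀ b ∈ A₁, ¬ R.lt a b) (hne : ∃ p ∈ A, p ∉ B) : A₁ ⊆ A := by
  intro a ha
  by_contra haA
  obtain ⟨p, hpA, hpB⟩ := hne
  have hlt := h.lt_of_mem p a hpA hpB ((h.cover a).resolve_left haA) haA
  by_cases hp : p ∈ A₁
  · exact hA₁ p hp a ha hlt
  · exact h₁.not_lt p a ((h₁.cover p).resolve_left hp) hp ha hlt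

theorem upper_subset_upper (h₁ : IsCut R A₁ B₁) (hA : A₁ ⊆ A)
    (hB : ∀ a ∈ B, ∀ b ∈ B, ¬ R.lt a b) (hne : ∃ y ∈ B, y ∉ A) : B ⊆ B₁ := by
  intro b hb
  by_contra hbB₁
  obtain ⟨y, hyB, hyA⟩ := hne
  have hyA₁ : y ∉ A₁ := fun h' => hyA (hA h')
  exact hB b hb y hyB (h₁.lt_of_mem b y ((h₁.cover b).resolve_right hbB₁) hbB₁
    ((h₁.cover y).resolve_left hyA₁) hyA₁)

theorem isIdentity_or_startsBeforeTermination (h₁ : IsCut R A₁ B₁) (h : IsCut R A B)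
    (hR₂ : ∀ q ∈ A₁ ∩ B₁, ∀ p ∈ B₁, ¬ R.lt p q)
    (hP : ∀ q ∈ A, ∃ p ∈ A, p ∉ B ∧ ¬ R.lt p q) :
    (R.part (A ∩ B₁) A₁ B).IsIdentity ∨ (R.part (A ∩ B₁) A₁ B).StartsBeforeTermination := by
  by_cases hid : ∀ r ∈ A ∩ B₁, r ∈ B ∧ r ∈ A₁
  · refine Or.inl ⟨fun a b => ?_, Set.eq_univ_of_forall fun a => (hid a.1 a.2).2,
      Set.eq_univ_of_forall fun a => (hid a.1 a.2).1⟩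
    exact h.not_lt_of_mem_inter a.1 b.1 a.2.1 (hid a.1 a.2).1 b.2.1 (hid b.1 b.2).1
  right
  have hex : ∃ p ∈ A ∩ B₁, p ∉ B := by
    push Not at hid
    obtain ⟨r, hr, hr'⟩ := hid
    by_cases hrB : r ∈ B
    · obtain ⟨p, hpA, hpB, hlt⟩ := hP r hr.1
      by_cases hpB₁ : p ∈ B₁
      · exact ⟨p, ⟨hpA, hpB₁⟩, hpB⟩
      · exact absurd (h₁.lt_of_mem p r ((h₁.cover p).resolve_right hpB₁) hpB₁ hr.2 (hr' hrB)) hlt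
    · exact ⟨r, hr, hrB⟩
  intro q
  by_cases hq : q.1 ∈ A₁
  · obtain ⟨p, hp, hpB⟩ := hex
    exact ⟨⟨p, hp⟩, hpB, hR₂ q.1 ⟨hq, q.2.2⟩ p hp.2⟩
  · obtain ⟨p, hpA, hpB, hlt⟩ := hP q.1 q.2.1
    have hpB₁ : p ∈ B₁ := by
      by_contra hpB₁
      exact hlt (h₁.lt_of_mem p q.1 ((h₁.cover p).resolve_right hpB₁) hpB₁ q.2.2 hq)
    exact ⟨⟨p, hpA, hpB₁⟩, hpB, hlt⟩

end IsCut

end Division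

section Factorization

variable {D M P P' Q R R₂ : PreIpomset σ}

theorem GlueRel.iso_of_isIdentity (h : GlueRel P Q R) (hP : P.IsIdentity) : Iso Q R := by
  obtain ⟨i, j, g⟩ := h.exists_isGluing
  refine ((g.isPart_right hP.1.targetsMaximal).congr (Set.eq_univ_of_forall fun r => ?_)
    (fun r _ => ⟨?_, fun hr => ?_⟩) fun _ _ => Iff.rfl).iso_of_univ
  · rcases g.cover r with ⟨x, rfl⟩ | hr
    exacts [g.exists_right x (hP.2.2 ▸ Set.mem_univ x), hr]
  · rintro ⟨x, rfl⟩
    exact (g.mem_S_iff _).2 ⟨x, rfl, hP.2.1 ▸ Set.mem_univ x⟩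
  · obtain ⟨x, hx, -⟩ := (g.mem_S_iff r).1 hr
    exact ⟨x, hx⟩

theorem GlueRel.exists_isPart_of_isIdentity (h : GlueRel P Q R) (hP : P.IsIdentity)
    (hQ : Q.SourcesMinimal) : ∃ i, IsPart P R i R.S Set.univ Set.univ := by
  obtain ⟨i, j, g⟩ := h.exists_isGluing
  have hS : ∀ x, i x ∈ R.S := fun x => (g.mem_S_iff _).2 ⟨x, rfl, hP.2.1 ▸ Set.mem_univ x⟩
  refine ⟨i, (g.isPart_left hQ).congr ?_ (fun r hr => iff_of_true ?_ trivial)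
    fun r hr => iff_of_true ?_ trivial⟩
  · refine Set.ext fun r => ⟨fun ⟨x, hx⟩ => hx ▸ hS x, fun hr => ?_⟩
    obtain ⟨x, hx, -⟩ := (g.mem_S_iff r).1 hr
    exact ⟨x, hx⟩
  · obtain ⟨x, rfl⟩ := hr
    exact hS x
  · obtain ⟨x, rfl⟩ := hr
    exact g.exists_right x (hP.2.2 ▸ Set.mem_univ x)

theorem GlueRel.S_eq_univ_right (h : GlueRel P Q R) (hR : R.S = Set.univ) : Q.S = Set.univ := by
  obtain ⟨i, j, g⟩ := h.exists_isGluing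
  refine Set.eq_univ_of_forall fun y => ?_
  obtain ⟨x, hx, -⟩ := (g.mem_S_iff (j y)).1 (hR ▸ Set.mem_univ _)
  exact g.mem_S_of_eq x y hx

theorem GlueRel.divide (h₁ : GlueRel D R₂ R) (h : GlueRel P Q R) (hD : D.Discrete)
    (hR₂ : R₂.SourcesMinimal) (hQ : Q.Discrete) (hQS : ∃ y, y ∉ Q.S) (hP : P.TargetsMaximal)
    (hgood : P.StartsBeforeTermination) (hid : ¬ P.IsIdentity) :
    ∃ P₂, GlueRel D P₂ P ∧ GlueRel P₂ Q R₂ ∧ P₂.TargetsMaximal ∧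
      (P₂.IsIdentity ∨ P₂.StartsBeforeTermination) := by
  obtain ⟨d, r₂, g₁⟩ := h₁.exists_isGluing
  obtain ⟨i, j, g⟩ := h.exists_isGluing
  have c₁ := g₁.isCut hD.targetsMaximal hR₂
  have c := g.isCut hP hQ.sourcesMinimal
  have hd := g₁.isPart_left hR₂
  have hr₂ := g₁.isPart_right hD.targetsMaximal
  have hi := g.isPart_left hQ.sourcesMinimal
  have hj := g.isPart_right hP
  have hA : Set.range d ⊆ Set.range i := by
    refine c₁.lower_subset_lower c (fun a ha b hb => hd.not_lt_of_discrete hD ha hb) ?_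
    obtain ⟨x, hx⟩ := hgood.exists_not_mem_T hid
    exact ⟨i x, hi.mem x, fun h' => hx ((hi.mem_T_iff x).2 h')⟩
  have hB : Set.range j ⊆ Set.range r₂ := by
    refine c₁.upper_subset_upper hA (fun a ha b hb => hj.not_lt_of_discrete hQ ha hb) ?_
    obtain ⟨y, hy⟩ := hQS
    exact ⟨j y, hj.mem y, fun h' => hy ((hj.mem_S_iff y).2 h')⟩
  have hk := isPart_val R (Set.range i ∩ Set.range r₂) (Set.range d) (Set.range j)
  refine ⟨_, c₁.glueRel_lowerPart hA hB hd hk hi, c.glueRel_upperPart hA hB hk hj hr₂,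
    fun x hx y => hi.not_lt_of_targetsMaximal hP x.2.1 hx y.2.1,
    c₁.isIdentity_or_startsBeforeTermination c ?_ fun q hq => ?_⟩
  · exact fun q hq p hp => hr₂.not_lt_of_sourcesMinimal hR₂ hq.2 hq.1 hp
  · exact hi.exists_of_startsBeforeTermination hgood hq

theorem GlueRel.assoc (h₁ : GlueRel D P' P) (h : GlueRel P Q R) (hD : D.TargetsMaximal)
    (hP' : P'.SourcesMinimal) (hP : P.TargetsMaximal) (hQ : Q.SourcesMinimal) :
    ∃ R', GlueRel P' Q R' ∧ GlueRel D R' R := by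
  obtain ⟨i, j, g⟩ := h.exists_isGluing
  have c := g.isCut hP hQ
  have hi := g.isPart_left hQ
  have hj := g.isPart_right hP
  obtain ⟨d, k, g₁⟩ := (h₁.trans_iso hi.iso_part).exists_isGluing
  have c₁ := g₁.isCut hD hP'
  have hval := isPart_val R (Set.range i) R.S (Set.range j)
  have hd : IsPart D R (Subtype.val ∘ d) (Subtype.val '' Set.range d) R.S
      (Subtype.val '' Set.range k ∪ Set.range j) := (g₁.isPart_left hP').comp hval
    (fun _ => Iff.rfl) fun x =>
    ⟨fun hx => Or.inl (Set.mem_image_of_mem _ hx), fun hx => hx.elim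
      (fun ⟨a, ha, hax⟩ => Subtype.ext hax ▸ ha) fun hx => c₁.T_subset hx⟩
  have hk : IsPart P' R (Subtype.val ∘ k) (Subtype.val '' Set.range k) (Subtype.val '' Set.range d)
      (Set.range j) := (g₁.isPart_right hD).comp hval
    (fun _ => Subtype.val_injective.mem_set_image.symm) fun _ => Iff.rfl
  have hrange : Subtype.val '' Set.range k =
      Set.range i ∩ (Subtype.val '' Set.range k ∪ Set.range j) := by
    ext r
    refine ⟨fun ⟨a, ha, hr⟩ => hr ▸ ⟨a.2, Or.inl ⟨a, ha, rfl⟩⟩, fun ⟨hrA, hr⟩ => hr.elim id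
      fun hrB => ⟨⟨r, hrA⟩, c₁.T_subset hrB, rfl⟩⟩
  have hA : Subtype.val '' Set.range d ⊆ Set.range i := Set.image_subset_iff.2 fun a _ => a.2
  exact ⟨R.upperPart (Subtype.val '' Set.range d) (Subtype.val '' Set.range k ∪ Set.range j),
    c.glueRel_upperPart hA Set.subset_union_right
      (hk.congr hrange (fun _ _ => Iff.rfl) fun _ _ => Iff.rfl) hj (isPart_val _ _ _ _),
    (c.lift c₁).glueRel hd (isPart_val _ _ _ _)⟩

end Factorization

section Decomposition

variable {P R : PreIpomset σ}

theorem GluesTo.ne_nil {l : List (PreIpomset σ)} (h : GluesTo l R) : l ≠ [] := by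
  cases h <;> simp

theorem GluesTo.startsBeforeTermination {l : List (PreIpomset σ)} (h : GluesTo l R)
    (hdisc : ∀ P ∈ l, P.Discrete) (hlast : ∀ L, l.getLast? = some L → ∃ x, x ∉ L.T) :
    R.StartsBeforeTermination := by
  induction h with
  | @single P R hiso =>
    have hR := hiso.discrete (hdisc P List.mem_cons_self)
    obtain ⟨x, hx⟩ := hlast P rfl
    obtain ⟨f, -, -, -, hT, -⟩ := hiso
    exact fun _ => ⟨f x, fun h => hx ((hT x).2 h), hR _ _⟩
  | @cons P l R' R h₁ h₂ ih =>
    obtain ⟨i, j, g⟩ := h₂.exists_isGluing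
    refine g.startsBeforeTermination (hdisc P List.mem_cons_self)
      (ih (fun Q hQ => hdisc Q (List.mem_cons_of_mem P hQ)) fun L hL => hlast L ?_)
    obtain ⟨a, t, rfl⟩ := List.exists_cons_of_ne_nil h₁.ne_nil
    rwa [List.getLast?_cons_cons]

theorem InQ.isIdentity_or_startsBeforeTermination (h : InQ P) :
    P.IsIdentity ∨ P.StartsBeforeTermination := by
  obtain ⟨l, ⟨hglue, ⟨I, rfl, hI⟩ | ⟨hmem, -⟩⟩, hlast⟩ := h
  · cases hglue with
    | single hiso => exact Or.inl (hiso.isIdentity hI.2)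
    | cons h₁ _ => cases h₁
  · refine Or.inr (hglue.startsBeforeTermination
      (fun Q hQ => (hmem Q hQ).elim (fun h => h.1.2.1) fun h => h.1.2.1) fun L hL => ?_)
    rcases hmem L (List.mem_of_getLast? hL) with hst | hterm
    · exact absurd hst (hlast L hL)
    · exact (Set.ne_univ_iff_exists_notMem _).1 hterm.2

end Decomposition

end PreIpomset

/-! ### Paths -/

namespace PrePHDA

open PreIpomset

variable {σ : Type} {X : PrePHDA σ} {P Q R : PreIpomset σ}

theorem ev_discrete (hX : X.IsPHDA) (x : X.cell) : (X.ev x).Discrete := (hX.1 x).2.1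

theorem isIdentity_idOf (hX : X.IsPHDA) (x : X.cell) : (X.ev x).idOf.IsIdentity :=
  ⟨ev_discrete hX x, rfl, rfl⟩

theorem Rec.trans_iso {x z : X.cell} {α : X.Path x z} (h : X.Rec α R) (h' : Iso R P) :
    X.Rec α P := by
  cases h with
  | nil _ _ h0 => exact .nil _ _ (h0.trans h')
  | up y A hf rest h₁ h₂ => exact .up _ _ hf rest h₁ (h₂.trans_iso h')
  | down y B hf rest h₁ h₂ => exact .down _ _ hf rest h₁ (h₂.trans_iso h')

theorem Rec.sourcesMinimal (hX : X.IsPHDA) {x z : X.cell} {α : X.Path x z} (h : X.Rec α R) :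
    R.SourcesMinimal := by
  induction h with
  | nil x R h0 => exact (h0.isIdentity (isIdentity_idOf hX x)).1.sourcesMinimal
  | up y A hf rest _ hg ih =>
    obtain ⟨i, j, g⟩ := hg.exists_isGluing
    exact g.sourcesMinimal (ev_discrete hX y) ih
  | down y B hf rest _ hg ih =>
    obtain ⟨i, j, g⟩ := hg.exists_isGluing
    exact g.sourcesMinimal (ev_discrete hX y) ih

theorem Rec.targetsMaximal (hX : X.IsPHDA) {x z : X.cell} {α : X.Path x z} (h : X.Rec α R) :
    R.TargetsMaximal := by
  induction h with
  | nil x R h0 => exact (h0.isIdentity (isIdentity_idOf hX x)).1.targetsMaximal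
  | up y A hf rest _ hg ih =>
    obtain ⟨i, j, g⟩ := hg.exists_isGluing
    exact g.targetsMaximal (ev_discrete hX y) ih
  | down y B hf rest _ hg ih =>
    obtain ⟨i, j, g⟩ := hg.exists_isGluing
    exact g.targetsMaximal (ev_discrete hX y) ih

theorem Rec.exists_isPart_source (hX : X.IsPHDA) {s x : X.cell} {α : X.Path s x}
    (h : X.Rec α R) : ∃ e, IsPart (X.ev s).idOf R e R.S Set.univ Set.univ := by
  have hR := h.sourcesMinimal hX
  cases h with
  | nil _ _ h0 =>
    obtain ⟨f, hf⟩ := h0.exists_isPart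
    obtain ⟨-, hRS, hRT⟩ := h0.isIdentity (isIdentity_idOf hX s)
    exact ⟨f, hf.congr hRS.symm (fun _ _ => by simp [hRS]) fun _ _ => by simp [hRT]⟩
  | up y A hf rest _ hg =>
    obtain ⟨i, j, g⟩ := hg.exists_isGluing
    obtain ⟨-, e, he, hrange, hev, hlab⟩ := hX.2.2.1 y A ∅ s hf
    refine ⟨_, g.isPart_source hR (ev_discrete hX s) ⟨he, ?_, fun a b => iff_of_false
      (ev_discrete hX s a b) (ev_discrete hX y _ _), hev, fun _ => iff_of_true trivial trivial,
      fun _ => iff_of_true trivial trivial, hlab⟩⟩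
    show Set.range e = Aᶜ
    rw [hrange, Set.union_empty]
  | down y B hf rest _ hg =>
    obtain ⟨i, j, g⟩ := hg.exists_isGluing
    exact ⟨_, g.isPart_source hR (ev_discrete hX s) (e := id) ⟨Function.injective_id,
      Set.range_id, fun _ _ => Iff.rfl, fun _ _ => Iff.rfl, fun _ => iff_of_true trivial trivial,
      fun _ => iff_of_true trivial trivial, fun _ => rfl⟩⟩

theorem Rec.comp (hX : X.IsPHDA) (hQ : Q.Discrete) {s m x : X.cell} {α : X.Path s m}
    {β : X.Path m x} (hα : X.Rec α P) (hβ : X.Rec β Q) (h : GlueRel P Q R) :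
    X.Rec (α.comp β) R := by
  induction α generalizing P R with
  | nil z =>
    cases hα with
    | nil _ _ h0 => exact hβ.trans_iso (h.iso_of_isIdentity (h0.isIdentity (isIdentity_idOf hX z)))
  | up y A hf rest ih =>
    cases hα with
    | up _ _ _ _ hrest hg =>
      obtain ⟨R', h₁, h₂⟩ := hg.assoc h (Discrete.targetsMaximal (ev_discrete hX y))
        (hrest.sourcesMinimal hX) ((Rec.up y A hf rest hrest hg).targetsMaximal hX)
        hQ.sourcesMinimal
      exact .up y A hf _ (ih hrest hβ h₁) h₂
  | down y B hf rest ih =>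
    cases hα with
    | down _ _ _ _ hrest hg =>
      obtain ⟨R', h₁, h₂⟩ := hg.assoc h (Discrete.targetsMaximal (ev_discrete hX y))
        (hrest.sourcesMinimal hX) ((Rec.down y B hf rest hrest hg).targetsMaximal hX)
        hQ.sourcesMinimal
      exact .down y B hf _ (ih hrest hβ h₁) h₂

theorem Rec.exists_split_of_isIdentity (hX : X.IsPHDA) (hQ : Q.SourcesMinimal) {s x : X.cell}
    {α : X.Path s x} (hα : X.Rec α R) (h : GlueRel P Q R) (hP : P.IsIdentity) :
    ∃ m, (∃ β : X.Path s m, X.Rec β P) ∧ ∃ γ : X.Path m x, X.Rec γ Q := by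
  obtain ⟨e, he⟩ := hα.exists_isPart_source hX
  obtain ⟨i, hi⟩ := h.exists_isPart_of_isIdentity hP hQ
  exact ⟨s, ⟨.nil s, .nil _ _ (he.iso hi)⟩, α, hα.trans_iso (h.iso_of_isIdentity hP).symm⟩

theorem Rec.exists_split (hX : X.IsPHDA) (hQ : Q.Discrete) (hQS : ∃ y, y ∉ Q.S) {s x : X.cell}
    {α : X.Path s x} (hα : X.Rec α R) (h : GlueRel P Q R) (hP : P.TargetsMaximal)
    (hinv : P.IsIdentity ∨ P.StartsBeforeTermination) :
    ∃ m, (∃ β : X.Path s m, X.Rec β P) ∧ ∃ γ : X.Path m x, X.Rec γ Q := by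
  induction α generalizing P R with
  | nil z =>
    cases hα with
    | nil _ _ h0 =>
      obtain ⟨y, hy⟩ := hQS
      exact absurd (h.S_eq_univ_right (h0.isIdentity (isIdentity_idOf hX z)).2.1 ▸
        Set.mem_univ y) hy
  | up y A hf rest ih =>
    by_cases hid : P.IsIdentity
    · exact hα.exists_split_of_isIdentity hX hQ.sourcesMinimal h hid
    cases hα with
    | up _ _ _ _ hrest hg =>
      obtain ⟨P₂, h₁, h₂, hP₂, hinv₂⟩ := hg.divide h (ev_discrete hX y)
        (hrest.sourcesMinimal hX) hQ hQS hP (hinv.resolve_left hid) hid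
      obtain ⟨m, ⟨β, hβ⟩, hγ⟩ := ih hrest h₂ hP₂ hinv₂
      exact ⟨m, ⟨.up y A hf β, .up y A hf β hβ h₁⟩, hγ⟩
  | down y B hf rest ih =>
    by_cases hid : P.IsIdentity
    · exact hα.exists_split_of_isIdentity hX hQ.sourcesMinimal h hid
    cases hα with
    | down _ _ _ _ hrest hg =>
      obtain ⟨P₂, h₁, h₂, hP₂, hinv₂⟩ := hg.divide h (ev_discrete hX y)
        (hrest.sourcesMinimal hX) hQ hQS hP (hinv.resolve_left hid) hid
      obtain ⟨m, ⟨β, hβ⟩, hγ⟩ := ih hrest h₂ hP₂ hinv₂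
      exact ⟨m, ⟨.down y B hf β, .down y B hf β hβ h₁⟩, hγ⟩

end PrePHDA

open PreIpomset

theorem track_decomposition_general {σ : Type} (X : PrePHDA σ) (hX : X.IsPHDA)
    (K : Set X.cell) (V : PreIpomset σ) (hV : V.IsConclist)
    (U' W' : Set V.carrier) (hU : U' ≠ Set.univ)
    (P : PreIpomset σ) (hP : P.IsIpomset) (hq : InQ P)
    (R : PreIpomset σ) (hR : GlueRel P (V.withIfaces U' W') R) :
    X.track K R = X.track (X.track K P) (V.withIfaces U' W') := by
  have hQ : (V.withIfaces U' W').Discrete := hV.2.1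
  ext x
  constructor
  · rintro ⟨s, α, hs, hα⟩
    obtain ⟨m, ⟨β, hβ⟩, γ, hγ⟩ := hα.exists_split hX hQ ((Set.ne_univ_iff_exists_notMem U').1 hU)
      hR hP.tgt_max hq.isIdentity_or_startsBeforeTermination
    exact ⟨m, γ, ⟨s, β, hs, hβ⟩, hγ⟩
  · rintro ⟨m, γ, ⟨s, β, hs, hβ⟩, hγ⟩
    exact ⟨s, β.comp γ, hs, hβ.comp hX hQ hγ hR⟩

/-- For a partial HDA `X`, `K ⊆ X`, a conclist `V` with `U ⊊ V`,
`W ⊆ V`, and `P ∈ iPoms^q` with target interface `U`: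
`X(K, P*⟨U,V,W⟩) = X(X(K,P), ⟨U,V,W⟩)`. -/
theorem track_decomposition {σ : Type} [Finite σ] (X : PrePHDA σ) (hX : X.IsPHDA)
    (K : Set X.cell) (V : PreIpomset σ) (hV : V.IsConclist)
    (U' W' : Set V.carrier) (hU : U' ≠ Set.univ)
    (P : PreIpomset σ) (hP : P.IsIpomset) (hq : InQ P)
    (R : PreIpomset σ) (hR : GlueRel P (V.withIfaces U' W') R) :
    X.track K R = X.track (X.track K P) (V.withIfaces U' W') :=
  track_decomposition_general X hX K V hV U' W' hU P hP hq R hR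

end HDA
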